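/- arXiv:1904.13040 — 9 statements merged into one kernel-verified Lean document; each statement's English description precedes it below -/
import Mathlib

section
/- For nonnegative integers r, s, k with r + s ≤ k, we have ∑_{i=0}^{k-r-s} C(k-r-s, i) · (i+s)! · (k-i-s)! = (k+1)! · r! · s! / (r+s+1)!. -/
open Finset

/-- Triangle sum swap: summing over `{(i,j) : i + j ≤ n}` two ways. -/
lemma triangle_sum_swap {M : Type*} [AddCommMonoid M] (n : ℕ) (f : ℕ → ℕ → M) :
    (∑ i ∈ range (n + 1), ∑ j ∈ range (n - i + 1), f i j)
      = ∑ m ∈ range (n + 1), ∑ i ∈ range (m + 1), f i (m - i) := by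
  rw [Finset.sum_sigma', Finset.sum_sigma']
  refine Finset.sum_nbij' (fun x => ⟨x.1 + x.2, x.1⟩) (fun x => ⟨x.2, x.1 - x.2⟩)
    ?_ ?_ ?_ ?_ ?_
  · rintro ⟨a, b⟩ hab
    simp only [Finset.mem_sigma, Finset.mem_range] at hab ⊢
    omega
  · rintro ⟨a, b⟩ hab
    simp only [Finset.mem_sigma, Finset.mem_range] at hab ⊢
    omega
  · rintro ⟨a, b⟩ hab
    simp only [Finset.mem_sigma, Finset.mem_range] at hab
    show (⟨a, a + b - a⟩ : Σ _ : ℕ, ℕ) = ⟨a, b⟩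
    have hb : a + b - a = b := by omega
    rw [hb]
  · rintro ⟨a, b⟩ hab
    simp only [Finset.mem_sigma, Finset.mem_range] at hab
    show (⟨b + (a - b), b⟩ : Σ _ : ℕ, ℕ) = ⟨a, b⟩
    have hb : b + (a - b) = a := by omega
    rw [hb]
  · rintro ⟨a, b⟩ hab
    show f a b = f a (a + b - a)
    have hb : a + b - a = b := by omega
    rw [hb]

/-- Convolution of hockey-stick sums. -/
lemma choose_conv (r s n : ℕ) :
    ∑ i ∈ range (n + 1), (i + s).choose s * (n - i + r).choose r
      = (n + r + s + 1).choose (r + s + 1) := by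
  induction r generalizing n with
  | zero =>
    simp only [Nat.choose_zero_right, mul_one, Nat.sum_range_add_choose]
    congr 1 <;> omega
  | succ r ih =>
    have key : ∀ i ∈ range (n + 1),
        (i + s).choose s * (n - i + (r + 1)).choose (r + 1)
          = ∑ j ∈ range (n - i + 1), (i + s).choose s * (j + r).choose r := by
      intro i _
      rw [← Finset.mul_sum, Nat.sum_range_add_choose, ← Nat.add_assoc]
    rw [Finset.sum_congr rfl key, triangle_sum_swap n (fun i j => (i + s).choose s * (j + r).choose r)]
    calc ∑ m ∈ range (n + 1), ∑ i ∈ range (m + 1), (i + s).choose s * (m - i + r).choose r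
        = ∑ m ∈ range (n + 1), (m + (r + s + 1)).choose (r + s + 1) := by
          refine Finset.sum_congr rfl fun m _ => ?_
          rw [ih m]; congr 1; omega
      _ = (n + (r + s + 1) + 1).choose (r + s + 1 + 1) := Nat.sum_range_add_choose _ _
      _ = (n + (r + 1) + s + 1).choose (r + 1 + s + 1) := by congr 1 <;> omega

theorem sum_binomial_factorial_eq (r s k : ℕ) (h : r + s ≤ k) :
    ∑ i ∈ Finset.range (k - r - s + 1),
      (k - r - s).choose i * (i + s).factorial * (k - i - s).factorial
      = (k + 1).factorial * r.factorial * s.factorial / (r + s + 1).factorial := by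
  set n := k - r - s with hn
  have hk : k = n + r + s := by omega
  have hterm : ∀ i ∈ range (n + 1),
      n.choose i * (i + s).factorial * (k - i - s).factorial
        = ((i + s).choose s * (n - i + r).choose r) * (n.factorial * r.factorial * s.factorial) := by
    intro i hi
    rw [Finset.mem_range] at hi
    have hi' : i ≤ n := by omega
    have h1 : (i + s).choose s * s.factorial * i.factorial = (i + s).factorial := by
      have := Nat.choose_mul_factorial_mul_factorial (show s ≤ i + s by omega)
      simpa using this
    have h2 : (n - i + r).choose r * r.factorial * (n - i).factorial = (n - i + r).factorial := by
      have := Nat.choose_mul_factorial_mul_factorial (show r ≤ n - i + r by omega)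
      simpa using this
    have h3 : n.choose i * i.factorial * (n - i).factorial = n.factorial :=
      Nat.choose_mul_factorial_mul_factorial hi'
    have h4 : k - i - s = n - i + r := by omega
    rw [h4, ← h1, ← h2, ← h3]
    ring
  rw [Finset.sum_congr rfl hterm, ← Finset.sum_mul, choose_conv r s n]
  have hle : r + s + 1 ≤ k + 1 := by omega
  have hfac : (k + 1).choose (r + s + 1) * (r + s + 1).factorial * n.factorial
      = (k + 1).factorial := by
    have := Nat.choose_mul_factorial_mul_factorial hle
    have h5 : k + 1 - (r + s + 1) = n := by omega
    rwa [h5] at this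
  have hrhs : (k + 1).factorial * r.factorial * s.factorial
      = ((k + 1).choose (r + s + 1) * (n.factorial * r.factorial * s.factorial))
        * (r + s + 1).factorial := by
    rw [← hfac]; ring
  rw [hrhs, Nat.mul_div_cancel _ (Nat.factorial_pos _)]
  congr 2
  omega
end

section
/- For nonnegative integers a and b, (a+b+1)!/(a!·b!) divides lcm(a+1, a+2, ..., a+b+1). -/
/-!
The `b`-th forward difference of `x ↦ x⁻¹` at `a + 1` is
`(-1)^b b! / ((a + 1)(a + 2)⋯(a + b + 1)) = ± 1 / N`, where `N = (a + b + 1)! / (a! b!)`;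
on the other hand it is an integer combination of `1 / (a + 1), …, 1 / (a + b + 1)`.
Multiplying by the lcm `L` of `a + 1, …, a + b + 1` makes every term integral, so `L / N ∈ ℤ`.
-/

open Finset Nat Polynomial

lemma ascPochhammer_succ_eval_left {K : Type*} [CommSemiring K] (n : ℕ) (x : K) :
    (ascPochhammer K (n + 1)).eval x = x * (ascPochhammer K n).eval (x + 1) := by
  simp [ascPochhammer_succ_left]

theorem fwdDiff_iter_inv {K : Type*} [Field K] (n : ℕ) (x : K)
    (hx : (ascPochhammer K (n + 1)).eval x ≠ 0) :
    (fwdDiff 1)^[n] (·⁻¹) x = (-1) ^ n * n ! / (ascPochhammer K (n + 1)).eval x := by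
  induction n generalizing x with
  | zero => simp
  | succ n ih =>
    -- `x (x + 1) ⋯ (x + n + 1)` splits off either end; the two splittings differ by `n + 1`.
    have hleft := ascPochhammer_succ_eval_left (n + 1) x
    have hright := ascPochhammer_succ_eval (n + 1) x
    rw [hright] at hx
    obtain ⟨hP, hlast⟩ := mul_ne_zero_iff.mp hx
    have hQ := right_ne_zero_of_mul (hleft ▸ hright ▸ hx)
    rw [Function.iterate_succ_apply', fwdDiff, ih x hP, ih (x + 1) hQ, hright]
    field_simp
    push_cast [factorial_succ] at hright ⊢
    linear_combination -(-1) ^ n * (n ! : K) * (hleft.symm.trans hright)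

lemma exists_mul_fwdDiff_iter_inv_eq_intCast (L a n : ℕ) (h : ∀ k ≤ n, a + k ∣ L) :
    ∃ z : ℤ, (L : ℚ) * (fwdDiff 1)^[n] (·⁻¹) (a : ℚ) = z := by
  refine ⟨∑ k ∈ range (n + 1), (-1) ^ (n - k) * n.choose k * ((L / (a + k) : ℕ) : ℤ), ?_⟩
  rw [fwdDiff_iter_eq_sum_shift, mul_sum, Int.cast_sum]
  refine sum_congr rfl fun k hk => ?_
  rw [Int.cast_mul, Int.cast_natCast,
    Nat.cast_div_charZero (h k (Nat.lt_succ_iff.mp (mem_range.mp hk)))]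
  simp only [zsmul_eq_mul, nsmul_eq_mul, mul_one]
  push_cast
  ring

lemma factorial_div_factorial_mul_factorial (a b : ℕ) :
    (a + b + 1)! / (a ! * b !) = (b + 1) * (a + b + 1).choose (b + 1) := by
  refine Nat.div_eq_of_eq_mul_left (by positivity) ?_
  have h := add_choose_mul_factorial_mul_factorial a (b + 1)
  rw [← add_assoc, factorial_succ] at h
  rw [← h]
  ring

theorem factorial_ratio_dvd_lcm_Icc (a b : ℕ) :
    (a + b + 1).factorial / (a.factorial * b.factorial) ∣
      (Finset.Icc (a + 1) (a + b + 1)).lcm id := by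
  set L := (Icc (a + 1) (a + b + 1)).lcm id
  obtain ⟨z, hz⟩ := exists_mul_fwdDiff_iter_inv_eq_intCast L (a + 1) b
    fun k hk => dvd_lcm (mem_Icc.2 ⟨by omega, by omega⟩)
  have hC : 0 < (a + b + 1).choose (b + 1) := choose_pos (by omega)
  have hP : (ascPochhammer ℚ (b + 1)).eval ((a + 1 : ℕ) : ℚ) =
      (b + 1)! * (a + b + 1).choose (b + 1) := by
    rw [ascPochhammer_nat_eq_natCast_ascFactorial, ascFactorial_eq_factorial_mul_choose, add_assoc]
    push_cast
    rfl
  rw [fwdDiff_iter_inv b _ (hP ▸ by positivity), hP] at hz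
  rw [factorial_div_factorial_mul_factorial]
  refine Int.natCast_dvd_natCast.mp ⟨(-1) ^ b * z, ?_⟩
  have hsign : ((-1 : ℚ) ^ b) ^ 2 = 1 := by rw [← pow_mul, pow_mul', neg_one_sq, one_pow]
  qify
  rw [← hz]
  field_simp
  push_cast [factorial_succ]
  linear_combination -(L : ℚ) * (b ! : ℚ) * (b + 1) * hsign
end

section
/- For nonnegative integers a and b, the least common multiple of the set { (r+s+1)!/(r!·s!) : r, s ∈ ℤ≥0, r ≥ a, r + s ≤ a + b } equals lcm(a+1, a+2, ..., a+b+1). -/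
open Finset

private lemma keyA : ∀ (s r : ℕ),
    ∑ j ∈ Finset.range (s+1), ((-1:ℚ))^j * (s.choose j) / (r+j+1)
      = (r.factorial * s.factorial) / (r+s+1).factorial := by
  intro s
  induction s with
  | zero =>
    intro r
    have hr : ((r.factorial : ℚ)) ≠ 0 := by positivity
    simp [Nat.factorial_succ]
    field_simp
  | succ s ih =>
    intro r
    rw [Finset.sum_range_succ']
    have hsplit : ∀ j ∈ Finset.range (s+1),
        ((-1:ℚ))^(j+1) * ((s+1).choose (j+1)) / (r+((j+1:ℕ):ℚ)+1)
          = -(((-1:ℚ))^j * (s.choose j) / (((r+1:ℕ):ℚ)+j+1))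
            + ((-1:ℚ))^(j+1) * (s.choose (j+1)) / (r+((j+1:ℕ):ℚ)+1) := by
      intro j hj
      rw [Nat.choose_succ_succ]
      push_cast
      ring
    rw [Finset.sum_congr rfl hsplit, Finset.sum_add_distrib]
    rw [Finset.sum_neg_distrib, ih (r+1)]
    have e2 : ∑ j ∈ Finset.range (s+1),
        ((-1:ℚ))^(j+1) * (s.choose (j+1)) / (r+((j+1:ℕ):ℚ)+1)
        = ((r.factorial * s.factorial : ℚ) / (r+s+1).factorial) - 1/(r+1) := by
      have h := Finset.sum_range_succ'
        (fun j => ((-1:ℚ))^j * (s.choose j) / (r+(j:ℚ)+1)) (s+1)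
      have h2 : ∑ j ∈ Finset.range (s+2),
          ((-1:ℚ))^j * (s.choose j) / (r+(j:ℚ)+1)
          = (r.factorial * s.factorial : ℚ) / (r+s+1).factorial := by
        rw [Finset.sum_range_succ, ih r]
        simp [Nat.choose_succ_self]
      rw [h2] at h
      have h0 : ((-1:ℚ))^0 * (s.choose 0) / (r+((0:ℕ):ℚ)+1) = 1/(r+1) := by simp
      rw [h0] at h
      linarith [h]
    rw [e2]
    have h0 : ((-1:ℚ))^0 * ((s+1).choose 0) / (r+((0:ℕ):ℚ)+1) = 1/(r+1) := by simp
    rw [h0]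
    have hf1 : ((r+1+s+1).factorial : ℚ) = (r+s+2) * (r+s+1).factorial := by
      have : r+1+s+1 = (r+s+1)+1 := by ring
      rw [this, Nat.factorial_succ]; push_cast; ring
    have hf2 : ((r+(s+1)+1).factorial : ℚ) = (r+s+2) * (r+s+1).factorial := by
      have : r+(s+1)+1 = (r+s+1)+1 := by ring
      rw [this, Nat.factorial_succ]; push_cast; ring
    have hf3 : (((r+1).factorial : ℚ)) = (r+1) * r.factorial := by
      rw [Nat.factorial_succ]; push_cast; ring
    have hf4 : (((s+1).factorial : ℚ)) = (s+1) * s.factorial := by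
      rw [Nat.factorial_succ]; push_cast; ring
    rw [hf1, hf2, hf3, hf4]
    have p1 : ((r.factorial : ℚ)) ≠ 0 := by positivity
    have p2 : ((s.factorial : ℚ)) ≠ 0 := by positivity
    have p3 : (((r+s+1).factorial : ℚ)) ≠ 0 := by positivity
    have p4 : ((r:ℚ)+s+2) ≠ 0 := by positivity
    have p5 : ((r:ℚ)+1) ≠ 0 := by positivity
    field_simp
    ring

open Finset

private lemma fdvd (r s : ℕ) :
    (r+s+1).factorial / (r.factorial * s.factorial)
      ∣ (Finset.Icc (r+1) (r+s+1)).lcm id := by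
  set L : ℕ := (Finset.Icc (r+1) (r+s+1)).lcm id with hL
  set f : ℕ := (r+s+1).factorial / (r.factorial * s.factorial) with hf
  have hdvdfac : r.factorial * s.factorial ∣ (r+s+1).factorial :=
    (Nat.factorial_mul_factorial_dvd_factorial_add r s).trans
      (Nat.factorial_dvd_factorial (Nat.le_succ _))
  have hfmul : f * (r.factorial * s.factorial) = (r+s+1).factorial :=
    Nat.div_mul_cancel hdvdfac
  have hdvdL : ∀ j ∈ Finset.range (s+1), (r+j+1) ∣ L := by
    intro j hj
    have hmem : r+j+1 ∈ Finset.Icc (r+1) (r+s+1) := by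
      simp only [Finset.mem_Icc]
      simp only [Finset.mem_range] at hj
      omega
    exact Finset.dvd_lcm hmem
  -- the integer combination
  set z : ℤ := ∑ j ∈ Finset.range (s+1),
    (-1:ℤ)^j * (s.choose j) * (L / (r+j+1) : ℕ) with hz
  have hzQ : (z : ℚ) = (L : ℚ) * ((r.factorial * s.factorial : ℚ) / (r+s+1).factorial) := by
    rw [← keyA s r, Finset.mul_sum, hz, Int.cast_sum]
    refine Finset.sum_congr rfl ?_
    intro j hj
    have hcast : ((L / (r+j+1) : ℕ) : ℚ) = (L : ℚ) / ((r:ℚ)+j+1) := by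
      rw [Nat.cast_div (hdvdL j hj)]
      · push_cast; ring
      · positivity
    simp only [Int.cast_mul, Int.cast_pow, Int.cast_neg, Int.cast_one, Int.cast_natCast, hcast]
    ring
  have hLfz : (L : ℚ) = (f : ℚ) * z := by
    rw [hzQ]
    have p3 : (((r+s+1).factorial : ℚ)) ≠ 0 := by positivity
    have : (f : ℚ) * (r.factorial * s.factorial : ℚ) = ((r+s+1).factorial : ℚ) := by
      exact_mod_cast congrArg (Nat.cast : ℕ → ℚ) hfmul
    field_simp
    nlinarith [this]
  have hint : (L : ℤ) = (f : ℤ) * z := by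
    have := hLfz
    push_cast at this
    exact_mod_cast this
  have : (f : ℤ) ∣ (L : ℤ) := ⟨z, hint⟩
  exact_mod_cast Int.natCast_dvd_natCast.mp (by exact_mod_cast this)

theorem lcm_factorial_ratios_eq_lcm_Icc (a b : ℕ) :
    (((Finset.Icc a (a + b)) ×ˢ Finset.range (b + 1)).filter
        (fun p => p.1 + p.2 ≤ a + b)).lcm
      (fun p => (p.1 + p.2 + 1).factorial / (p.1.factorial * p.2.factorial))
      = (Finset.Icc (a + 1) (a + b + 1)).lcm id := by
  apply Nat.dvd_antisymm
  · apply Finset.lcm_dvd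
    intro p hp
    simp only [Finset.mem_filter, Finset.mem_product, Finset.mem_Icc, Finset.mem_range] at hp
    obtain ⟨⟨⟨har, _⟩, hs⟩, hab⟩ := hp
    refine (fdvd p.1 p.2).trans (Finset.lcm_dvd ?_)
    intro m hm
    simp only [Finset.mem_Icc] at hm
    exact Finset.dvd_lcm (by simp only [Finset.mem_Icc]; omega)
  · apply Finset.lcm_dvd
    intro m hm
    simp only [Finset.mem_Icc] at hm
    set s := m - (a+1) with hs
    have hm1 : m = a + s + 1 := by omega
    have hdvd : m ∣ (a+s+1).factorial / (a.factorial * s.factorial) := by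
      have hd : a.factorial * s.factorial ∣ (a+s).factorial :=
        Nat.factorial_mul_factorial_dvd_factorial_add a s
      have h1 : (a+s+1).factorial = (a+s+1) * (a+s).factorial := Nat.factorial_succ _
      rw [h1, Nat.mul_div_assoc _ hd, ← hm1]
      exact dvd_mul_right _ _
    have hmem : (a, s) ∈ (((Finset.Icc a (a + b)) ×ˢ Finset.range (b + 1)).filter
        (fun p => p.1 + p.2 ≤ a + b)) := by
      simp only [Finset.mem_filter, Finset.mem_product, Finset.mem_Icc, Finset.mem_range]
      omega
    have := Finset.dvd_lcm (f := fun p : ℕ × ℕ =>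
      (p.1 + p.2 + 1).factorial / (p.1.factorial * p.2.factorial)) hmem
    simpa using hdvd.trans this
end

section
/- Let λ ⊢ n, μ ⊢ m, s a λ-tableau and t a μ-tableau. Then gcd of the coefficients of the product Y_s · Y_{t^{+n}} · Y_{s+t} in ℤS_{n+m} is independent of the choice of s and t (it depends only on λ and μ). -/
open Finset Equiv MonoidAlgebra

namespace YS

variable {N : ℕ}

/-- The set of entries of a tableau `s` of shape `μ` with values in `Fin N`. -/
def entriesFinset (μ : YoungDiagram) (s : ↥μ.cells → Fin N) : Finset (Fin N) :=
  μ.cells.attach.image s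

/-- The entries in row `i` of the tableau `s`. -/
def rowFinset (μ : YoungDiagram) (s : ↥μ.cells → Fin N) (i : ℕ) : Finset (Fin N) :=
  (μ.cells.attach.filter (fun c => c.val.1 = i)).image s

/-- The entries in column `j` of the tableau `s`. -/
def colFinset (μ : YoungDiagram) (s : ↥μ.cells → Fin N) (j : ℕ) : Finset (Fin N) :=
  (μ.cells.attach.filter (fun c => c.val.2 = j)).image s

/-- The row stabilizer `R_s`: permutations fixing everything outside the entries of `s`
and permuting the entries within each row. -/
def rowStab (μ : YoungDiagram) (s : ↥μ.cells → Fin N) : Finset (Perm (Fin N)) :=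
  univ.filter fun σ =>
    (∀ x, x ∉ entriesFinset μ s → σ x = x) ∧
    ∀ i ∈ μ.cells.image Prod.fst, ∀ x ∈ rowFinset μ s i, σ x ∈ rowFinset μ s i

/-- The column stabilizer `C_s`. -/
def colStab (μ : YoungDiagram) (s : ↥μ.cells → Fin N) : Finset (Perm (Fin N)) :=
  univ.filter fun σ =>
    (∀ x, x ∉ entriesFinset μ s → σ x = x) ∧
    ∀ j ∈ μ.cells.image Prod.snd, ∀ x ∈ colFinset μ s j, σ x ∈ colFinset μ s j

/-- `{S} = ∑_{σ ∈ S} σ` in the integral group algebra. -/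
noncomputable def sumElt (S : Finset (Perm (Fin N))) : MonoidAlgebra ℤ (Perm (Fin N)) :=
  ∑ σ ∈ S, MonoidAlgebra.single σ 1

/-- `[S] = ∑_{σ ∈ S} sgn(σ) σ` in the integral group algebra. -/
noncomputable def altElt (S : Finset (Perm (Fin N))) : MonoidAlgebra ℤ (Perm (Fin N)) :=
  ∑ σ ∈ S, MonoidAlgebra.single σ ((Perm.sign σ : ℤˣ) : ℤ)

/-- The Young symmetrizer `Y_s = {R_s}[C_s]`. -/
noncomputable def youngSym (μ : YoungDiagram) (s : ↥μ.cells → Fin N) :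
    MonoidAlgebra ℤ (Perm (Fin N)) :=
  sumElt (rowStab μ s) * altElt (colStab μ s)

/-- The row stabilizer `R_{s+t}` of the combined tableau: row `i` of `s+t` consists of
the entries of row `i` of `s` together with those of row `i` of `t`. -/
def combRowStab (lam mu : YoungDiagram) (s : ↥lam.cells → Fin N) (t : ↥mu.cells → Fin N) :
    Finset (Perm (Fin N)) :=
  univ.filter fun σ =>
    (∀ x, x ∉ entriesFinset lam s ∪ entriesFinset mu t → σ x = x) ∧
    ∀ i ∈ lam.cells.image Prod.fst ∪ mu.cells.image Prod.fst,
      ∀ x ∈ rowFinset lam s i ∪ rowFinset mu t i, σ x ∈ rowFinset lam s i ∪ rowFinset mu t i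

/-- The column stabilizer `C_{s+t} = C_s C_t` of the combined tableau: the columns of `s+t`
are exactly the columns of `s` together with the columns of `t`. -/
def combColStab (lam mu : YoungDiagram) (s : ↥lam.cells → Fin N) (t : ↥mu.cells → Fin N) :
    Finset (Perm (Fin N)) :=
  univ.filter fun σ =>
    (∀ x, x ∉ entriesFinset lam s ∪ entriesFinset mu t → σ x = x) ∧
    (∀ j ∈ lam.cells.image Prod.snd, ∀ x ∈ colFinset lam s j, σ x ∈ colFinset lam s j) ∧
    (∀ j ∈ mu.cells.image Prod.snd, ∀ x ∈ colFinset mu t j, σ x ∈ colFinset mu t j)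

/-- The Young symmetrizer `Y_{s+t}` of the combined tableau `s+t` of shape `λ+μ`. -/
noncomputable def combYoungSym (lam mu : YoungDiagram) (s : ↥lam.cells → Fin N)
    (t : ↥mu.cells → Fin N) : MonoidAlgebra ℤ (Perm (Fin N)) :=
  sumElt (combRowStab lam mu s t) * altElt (combColStab lam mu s t)

/-- The (nonnegative) gcd of the coefficients of an element of the group algebra. -/
noncomputable def coeffGcd (f : MonoidAlgebra ℤ (Perm (Fin N))) : ℤ :=
  f.coeff.support.gcd f.coeff

end YS

/-
Any two admissible pairs `(s, t)` and `(s', t')` differ by a relabelling `π ∈ S_{n+m}` of the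
entries: `s' = π ∘ s` and `t' = π ∘ t`, since `s ⊔ t` and `s' ⊔ t'` are both injective on the
disjoint union of the cells. Relabelling conjugates every row and column stabilizer by `π`, so
each Young symmetrizer, and hence the product, is moved by the algebra automorphism of `ℤS_{n+m}`
induced by `σ ↦ πσπ⁻¹`. That automorphism only permutes the coefficients.
-/

namespace YS

lemma mem_image_equiv_iff {α β : Type*} [DecidableEq β] (e : α ≃ β) (E : Finset α) (y : β) :
    y ∈ E.image e ↔ e.symm y ∈ E := by
  rw [Finset.mem_image]
  constructor
  · rintro ⟨x, hx, rfl⟩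
    simpa using hx
  · exact fun h => ⟨e.symm y, h, by simp⟩

variable {N : ℕ}

section Relabel

variable (π : Perm (Fin N))

lemma forall_notMem_image_perm_iff (σ : Perm (Fin N)) (E : Finset (Fin N)) :
    (∀ x, x ∉ E.image π → σ x = x) ↔ ∀ x, x ∉ E → (π⁻¹ * σ * π) x = x := by
  simp only [mem_image_equiv_iff, Perm.mul_apply, Perm.inv_def, Equiv.symm_apply_eq]
  exact ⟨fun h x hx => h (π x) (by simpa using hx), fun h x hx => by simpa using h (π.symm x) hx⟩

lemma forall_mem_image_perm_iff (σ : Perm (Fin N)) (R : Finset (Fin N)) :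
    (∀ x ∈ R.image π, σ x ∈ R.image π) ↔ ∀ x ∈ R, (π⁻¹ * σ * π) x ∈ R := by
  simp only [mem_image_equiv_iff, Perm.mul_apply, Perm.inv_def]
  exact ⟨fun h x hx => h (π x) (by simpa using hx), fun h x hx => by simpa using h (π.symm x) hx⟩

lemma filter_eq_image_conj {p q : Perm (Fin N) → Prop} [DecidablePred p] [DecidablePred q]
    (h : ∀ σ, q σ ↔ p (π⁻¹ * σ * π)) :
    univ.filter q = (univ.filter p).image (MulAut.conj π) := by
  ext σ
  refine (Finset.mem_filter_univ σ).trans <| (h σ).trans ?_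
  refine Iff.trans ?_ (mem_image_equiv_iff (MulAut.conj π).toEquiv _ σ).symm
  simp

lemma entriesFinset_comp (μ : YoungDiagram) (s : ↥μ.cells → Fin N) (f : Fin N → Fin N) :
    entriesFinset μ (f ∘ s) = (entriesFinset μ s).image f := by
  simp only [entriesFinset, Finset.image_image]

lemma rowFinset_comp (μ : YoungDiagram) (s : ↥μ.cells → Fin N) (f : Fin N → Fin N) (i : ℕ) :
    rowFinset μ (f ∘ s) i = (rowFinset μ s i).image f := by
  simp only [rowFinset, Finset.image_image]

lemma colFinset_comp (μ : YoungDiagram) (s : ↥μ.cells → Fin N) (f : Fin N → Fin N) (j : ℕ) :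
    colFinset μ (f ∘ s) j = (colFinset μ s j).image f := by
  simp only [colFinset, Finset.image_image]

lemma rowStab_perm_comp (μ : YoungDiagram) (s : ↥μ.cells → Fin N) :
    rowStab μ (π ∘ s) = (rowStab μ s).image (MulAut.conj π) := by
  refine filter_eq_image_conj π fun σ => ?_
  simp only [entriesFinset_comp, rowFinset_comp]
  exact and_congr (forall_notMem_image_perm_iff π σ _)
    (forall₂_congr fun i _ => forall_mem_image_perm_iff π σ _)

lemma colStab_perm_comp (μ : YoungDiagram) (s : ↥μ.cells → Fin N) :
    colStab μ (π ∘ s) = (colStab μ s).image (MulAut.conj π) := by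
  refine filter_eq_image_conj π fun σ => ?_
  simp only [entriesFinset_comp, colFinset_comp]
  exact and_congr (forall_notMem_image_perm_iff π σ _)
    (forall₂_congr fun j _ => forall_mem_image_perm_iff π σ _)

lemma combRowStab_perm_comp (lam mu : YoungDiagram) (s : ↥lam.cells → Fin N)
    (t : ↥mu.cells → Fin N) :
    combRowStab lam mu (π ∘ s) (π ∘ t) = (combRowStab lam mu s t).image (MulAut.conj π) := by
  refine filter_eq_image_conj π fun σ => ?_
  simp only [entriesFinset_comp, rowFinset_comp, ← Finset.image_union]
  exact and_congr (forall_notMem_image_perm_iff π σ _)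
    (forall₂_congr fun i _ => forall_mem_image_perm_iff π σ _)

lemma combColStab_perm_comp (lam mu : YoungDiagram) (s : ↥lam.cells → Fin N)
    (t : ↥mu.cells → Fin N) :
    combColStab lam mu (π ∘ s) (π ∘ t) = (combColStab lam mu s t).image (MulAut.conj π) := by
  refine filter_eq_image_conj π fun σ => ?_
  simp only [entriesFinset_comp, colFinset_comp, ← Finset.image_union]
  exact and_congr (forall_notMem_image_perm_iff π σ _) <|
    and_congr (forall₂_congr fun j _ => forall_mem_image_perm_iff π σ _)
      (forall₂_congr fun j _ => forall_mem_image_perm_iff π σ _)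

lemma sign_conj (σ : Perm (Fin N)) : Perm.sign (MulAut.conj π σ) = Perm.sign σ := by
  rw [MulAut.conj_apply, map_mul, map_mul, mul_right_comm, map_inv, mul_inv_cancel,
    one_mul]

lemma sumElt_image (e : Perm (Fin N) ≃* Perm (Fin N)) (S : Finset (Perm (Fin N))) :
    sumElt (S.image e) = domCongr ℤ ℤ e (sumElt S) := by
  simp [sumElt, Finset.sum_image e.injective.injOn]

lemma altElt_image_conj (S : Finset (Perm (Fin N))) :
    altElt (S.image (MulAut.conj π)) = domCongr ℤ ℤ (MulAut.conj π) (altElt S) := by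
  rw [altElt, altElt, Finset.sum_image (MulAut.conj π).injective.injOn, map_sum]
  exact Finset.sum_congr rfl fun σ _ => by rw [domCongr_single, sign_conj]

lemma youngSym_perm_comp (μ : YoungDiagram) (s : ↥μ.cells → Fin N) :
    youngSym μ (π ∘ s) = domCongr ℤ ℤ (MulAut.conj π) (youngSym μ s) := by
  rw [youngSym, youngSym, rowStab_perm_comp, colStab_perm_comp, sumElt_image, altElt_image_conj,
    map_mul]

lemma combYoungSym_perm_comp (lam mu : YoungDiagram) (s : ↥lam.cells → Fin N)
    (t : ↥mu.cells → Fin N) :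
    combYoungSym lam mu (π ∘ s) (π ∘ t) =
      domCongr ℤ ℤ (MulAut.conj π) (combYoungSym lam mu s t) := by
  rw [combYoungSym, combYoungSym, combRowStab_perm_comp, combColStab_perm_comp, sumElt_image,
    altElt_image_conj, map_mul]

end Relabel

lemma coeffGcd_domCongr (e : Perm (Fin N) ≃* Perm (Fin N))
    (f : MonoidAlgebra ℤ (Perm (Fin N))) :
    coeffGcd (domCongr ℤ ℤ e f) = coeffGcd f := by
  classical
  rw [coeffGcd, coeffGcd, domCongr_support, Finset.map_eq_image, Finset.gcd_image]
  exact Finset.gcd_congr rfl fun σ _ => by simp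

lemma apply_ne_of_disjoint_entriesFinset {lam mu : YoungDiagram} {s : ↥lam.cells → Fin N}
    {t : ↥mu.cells → Fin N} (h : Disjoint (entriesFinset lam s) (entriesFinset mu t))
    (a : ↥lam.cells) (b : ↥mu.cells) : s a ≠ t b :=
  Finset.disjoint_iff_ne.mp h _ (Finset.mem_image_of_mem s (Finset.mem_attach _ a)) _
    (Finset.mem_image_of_mem t (Finset.mem_attach _ b))

end YS

open YS Finset in
theorem coeffGcd_youngSym_product_independent_general (n m : ℕ) (lam mu : YoungDiagram)
    (s s' : ↥lam.cells → Fin (n + m)) (t t' : ↥mu.cells → Fin (n + m))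
    (hs : Function.Injective s) (hs' : Function.Injective s')
    (ht : Function.Injective t) (ht' : Function.Injective t')
    (hsval : entriesFinset lam s = univ.filter (fun x : Fin (n + m) => (x : ℕ) < n))
    (hs'val : entriesFinset lam s' = univ.filter (fun x : Fin (n + m) => (x : ℕ) < n))
    (htval : entriesFinset mu t = univ.filter (fun x : Fin (n + m) => n ≤ (x : ℕ)))
    (ht'val : entriesFinset mu t' = univ.filter (fun x : Fin (n + m) => n ≤ (x : ℕ))) :
    coeffGcd (youngSym lam s * youngSym mu t * combYoungSym lam mu s t) =
      coeffGcd (youngSym lam s' * youngSym mu t' * combYoungSym lam mu s' t') := by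
  have hdisj : Disjoint (univ.filter fun x : Fin (n + m) => (x : ℕ) < n)
      (univ.filter fun x : Fin (n + m) => n ≤ (x : ℕ)) :=
    Finset.disjoint_filter.mpr fun _ _ hlt hle => (not_le.mpr hlt) hle
  obtain ⟨π, hπ⟩ := Perm.exists_extending_pair (Sum.elim s t) (Sum.elim s' t')
    (hs.sumElim ht (apply_ne_of_disjoint_entriesFinset (hsval ▸ htval ▸ hdisj)))
    (hs'.sumElim ht' (apply_ne_of_disjoint_entriesFinset (hs'val ▸ ht'val ▸ hdisj)))
  obtain rfl : s' = π ∘ s := funext fun c => (hπ (.inl c)).symm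
  obtain rfl : t' = π ∘ t := funext fun c => (hπ (.inr c)).symm
  rw [youngSym_perm_comp, youngSym_perm_comp, combYoungSym_perm_comp, ← map_mul, ← map_mul,
    coeffGcd_domCongr]

open YS Finset in
/-- The gcd `θ_{λ,μ}` of the coefficients of `Y_s Y_{t^{+n}} Y_{s+t}` is independent of the
choice of the `λ`-tableau `s` (with entries `{1,…,n}`) and `μ`-tableau `t`
(with entries `{n+1,…,n+m}`). -/
theorem coeffGcd_youngSym_product_independent (n m : ℕ) (lam mu : YoungDiagram)
    (hlam : lam.card = n) (hmu : mu.card = m)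
    (s s' : ↥lam.cells → Fin (n + m)) (t t' : ↥mu.cells → Fin (n + m))
    (hs : Function.Injective s) (hs' : Function.Injective s')
    (ht : Function.Injective t) (ht' : Function.Injective t')
    (hsval : entriesFinset lam s = univ.filter (fun x : Fin (n + m) => (x : ℕ) < n))
    (hs'val : entriesFinset lam s' = univ.filter (fun x : Fin (n + m) => (x : ℕ) < n))
    (htval : entriesFinset mu t = univ.filter (fun x : Fin (n + m) => n ≤ (x : ℕ)))
    (ht'val : entriesFinset mu t' = univ.filter (fun x : Fin (n + m) => n ≤ (x : ℕ))) :
    coeffGcd (youngSym lam s * youngSym mu t * combYoungSym lam mu s t) =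
      coeffGcd (youngSym lam s' * youngSym mu t' * combYoungSym lam mu s' t') :=
  coeffGcd_youngSym_product_independent_general n m lam mu s s' t t' hs hs' ht ht' hsval hs'val
    htval ht'val
end

section
/- Let λ ⊢ n and μ ⊢ m. Then θ_{λ,μ} = θ_{μ,λ}, where θ_{λ,μ} is the gcd of the coefficients of Y_s Y_{t^{+n}} Y_{s+t} in ℤS_{n+m} for any λ-tableau s and μ-tableau t. -/
open Finset Equiv MonoidAlgebra

/-!
Since `s, t` and `v, u` both fill `{0, …, n+m-1}` injectively and disjointly, there is a
permutation `π` with `v = π ∘ s` and `u = π ∘ t`. Relabelling a tableau by `π` conjugates its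
row and column stabilizers by `π`, so conjugation by `π`, an automorphism of `ℤS_{n+m}` that only
permutes coefficients, carries `Y_t Y_s Y_{t+s}` to `Y_u Y_v Y_{u+v}`. Finally `Y_t Y_s = Y_s Y_t`,
both factors being supported on permutations of disjoint sets, and `Y_{t+s} = Y_{s+t}`.
-/

namespace YS

section Relabel

variable {α : Type*} [DecidableEq α] (π : Perm α)

lemma mem_image_perm {A : Finset α} {x : α} : x ∈ A.image π ↔ π⁻¹ x ∈ A := by
  rw [mem_image]
  exact ⟨fun ⟨_, ha, h⟩ => h ▸ by simpa using ha, fun h => ⟨_, h, by simp⟩⟩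

lemma conj_fixes_compl_image_iff (E : Finset α) (σ : Perm α) :
    (∀ x ∉ E.image π, σ x = x) ↔ ∀ x ∉ E, (π⁻¹ * σ * π) x = x := by
  simp only [mem_image_perm, Perm.mul_apply, Perm.inv_eq_iff_eq]
  exact ⟨fun h x hx => h (π x) (by simpa using hx), fun h x hx => by simpa using h (π⁻¹ x) hx⟩

lemma conj_mapsTo_image_iff (A : Finset α) (σ : Perm α) :
    (∀ x ∈ A.image π, σ x ∈ A.image π) ↔ ∀ x ∈ A, (π⁻¹ * σ * π) x ∈ A := by
  simp only [mem_image_perm, Perm.mul_apply]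
  exact ⟨fun h x hx => h (π x) (by simpa using hx),
    fun h x hx => by simpa using h (π⁻¹ x) hx⟩

end Relabel

lemma mem_image_conj {G : Type*} [Group G] [DecidableEq G] {S : Finset G} {σ π : G} :
    σ ∈ S.image (fun τ => π * τ * π⁻¹) ↔ π⁻¹ * σ * π ∈ S := by
  simp only [mem_image]
  constructor
  · rintro ⟨τ, hτ, rfl⟩
    simpa [mul_assoc] using hτ
  · exact fun h => ⟨_, h, by group⟩

lemma commute_sum_single {k G : Type*} [CommSemiring k] [Monoid G] {S T : Finset G}
    {a b : G → k} (h : ∀ σ ∈ S, ∀ τ ∈ T, Commute σ τ) :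
    Commute (∑ σ ∈ S, single σ (a σ)) (∑ τ ∈ T, single τ (b τ)) :=
  .sum_left _ _ _ fun σ hσ => .sum_right _ _ _ fun τ hτ => by
    simp only [Commute, SemiconjBy, single_mul_single, (h σ hσ τ hτ).eq, mul_comm (a σ)]

lemma commute_of_fixes_compl {α : Type*} {σ τ : Perm α} {A B : Finset α}
    (hA : ∀ x ∉ A, σ x = x) (hB : ∀ x ∉ B, τ x = x) (hAB : Disjoint A B) : Commute σ τ :=
  Perm.Disjoint.commute fun x => by
    by_cases hx : x ∈ A
    · exact .inr (hB x (disjoint_left.1 hAB hx))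
    · exact .inl (hA x hx)

variable {N : ℕ}

section Conjugation

variable (π : Perm (Fin N)) (lam mu : YoungDiagram)
  (s : ↥lam.cells → Fin N) (t : ↥mu.cells → Fin N)

lemma entriesFinset_comp_s11 : entriesFinset lam (π ∘ s) = (entriesFinset lam s).image π := by
  simp [entriesFinset, image_image]

lemma rowFinset_comp_s11 (i : ℕ) : rowFinset lam (π ∘ s) i = (rowFinset lam s i).image π := by
  simp [rowFinset, image_image]

lemma colFinset_comp_s11 (j : ℕ) : colFinset lam (π ∘ s) j = (colFinset lam s j).image π := by
  simp [colFinset, image_image]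

lemma rowStab_comp : rowStab lam (π ∘ s) = (rowStab lam s).image (fun τ => π * τ * π⁻¹) := by
  ext σ
  simp only [mem_image_conj, rowStab, mem_filter, mem_univ, true_and, entriesFinset_comp_s11,
    rowFinset_comp_s11, conj_fixes_compl_image_iff, conj_mapsTo_image_iff]

lemma colStab_comp : colStab lam (π ∘ s) = (colStab lam s).image (fun τ => π * τ * π⁻¹) := by
  ext σ
  simp only [mem_image_conj, colStab, mem_filter, mem_univ, true_and, entriesFinset_comp_s11,
    colFinset_comp_s11, conj_fixes_compl_image_iff, conj_mapsTo_image_iff]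

lemma combRowStab_comp :
    combRowStab lam mu (π ∘ s) (π ∘ t) =
      (combRowStab lam mu s t).image (fun τ => π * τ * π⁻¹) := by
  ext σ
  simp only [mem_image_conj, combRowStab, mem_filter, mem_univ, true_and, entriesFinset_comp_s11,
    rowFinset_comp_s11, ← image_union, conj_fixes_compl_image_iff, conj_mapsTo_image_iff]

lemma combColStab_comp :
    combColStab lam mu (π ∘ s) (π ∘ t) =
      (combColStab lam mu s t).image (fun τ => π * τ * π⁻¹) := by
  ext σ
  simp only [mem_image_conj, combColStab, mem_filter, mem_univ, true_and, entriesFinset_comp_s11,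
    colFinset_comp_s11, ← image_union, conj_fixes_compl_image_iff, conj_mapsTo_image_iff]

lemma domCongr_conj_sumElt (S : Finset (Perm (Fin N))) :
    domCongr ℤ ℤ (MulAut.conj π) (sumElt S) = sumElt (S.image fun τ => π * τ * π⁻¹) := by
  rw [sumElt, map_sum, sumElt, 
    sum_image fun _ _ _ _ h => mul_right_injective π (mul_left_injective π⁻¹ h)]
  simp [MulAut.conj_apply]

lemma domCongr_conj_altElt (S : Finset (Perm (Fin N))) :
    domCongr ℤ ℤ (MulAut.conj π) (altElt S) = altElt (S.image fun τ => π * τ * π⁻¹) := by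
  rw [altElt, map_sum, altElt, 
    sum_image fun _ _ _ _ h => mul_right_injective π (mul_left_injective π⁻¹ h)]
  refine sum_congr rfl fun σ _ => ?_
  have sign_conj : Perm.sign (π * σ * π⁻¹) = Perm.sign σ := by
    rw [Perm.sign_mul, Perm.sign_mul, Perm.sign_inv, mul_right_comm, Int.units_mul_self, one_mul]
  rw [domCongr_single, MulAut.conj_apply, sign_conj]

lemma youngSym_comp :
    youngSym lam (π ∘ s) = domCongr ℤ ℤ (MulAut.conj π) (youngSym lam s) := by
  rw [youngSym, youngSym, map_mul, domCongr_conj_sumElt, domCongr_conj_altElt,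
    rowStab_comp, colStab_comp]

lemma combYoungSym_comp :
    combYoungSym lam mu (π ∘ s) (π ∘ t) =
      domCongr ℤ ℤ (MulAut.conj π) (combYoungSym lam mu s t) := by
  rw [combYoungSym, combYoungSym, map_mul, domCongr_conj_sumElt, domCongr_conj_altElt,
    combRowStab_comp, combColStab_comp]

end Conjugation

section Combined

variable (lam mu : YoungDiagram) (s : ↥lam.cells → Fin N) (t : ↥mu.cells → Fin N)

lemma combRowStab_comm : combRowStab lam mu s t = combRowStab mu lam t s := by
  ext σ
  simp only [combRowStab, mem_filter, union_comm]

lemma combColStab_comm : combColStab lam mu s t = combColStab mu lam t s := by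
  ext σ
  simp only [combColStab, mem_filter, union_comm]
  tauto

lemma combYoungSym_comm : combYoungSym lam mu s t = combYoungSym mu lam t s := by
  rw [combYoungSym, combYoungSym, combRowStab_comm, combColStab_comm]

end Combined

lemma rowStab_fixes_compl (μ : YoungDiagram) (s : ↥μ.cells → Fin N) :
    ∀ σ ∈ rowStab μ s, ∀ x ∉ entriesFinset μ s, σ x = x :=
  fun _ hσ => (mem_filter.1 hσ).2.1

lemma colStab_fixes_compl (μ : YoungDiagram) (s : ↥μ.cells → Fin N) :
    ∀ σ ∈ colStab μ s, ∀ x ∉ entriesFinset μ s, σ x = x :=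
  fun _ hσ => (mem_filter.1 hσ).2.1

lemma commute_youngSym {lam mu : YoungDiagram} {s : ↥lam.cells → Fin N}
    {t : ↥mu.cells → Fin N} (hd : Disjoint (entriesFinset lam s) (entriesFinset mu t)) :
    Commute (youngSym lam s) (youngSym mu t) := by
  have key {S T : Finset (Perm (Fin N))} {a b : Perm (Fin N) → ℤ}
      (hS : ∀ σ ∈ S, ∀ x ∉ entriesFinset lam s, σ x = x)
      (hT : ∀ τ ∈ T, ∀ x ∉ entriesFinset mu t, τ x = x) :
      Commute (∑ σ ∈ S, single σ (a σ)) (∑ τ ∈ T, single τ (b τ)) :=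
    commute_sum_single fun σ hσ τ hτ => commute_of_fixes_compl (hS σ hσ) (hT τ hτ) hd
  have hRs := rowStab_fixes_compl lam s
  have hCs := colStab_fixes_compl lam s
  have hRt := rowStab_fixes_compl mu t
  have hCt := colStab_fixes_compl mu t
  exact .mul_left (.mul_right (key hRs hRt) (key hRs hCt))
    (.mul_right (key hCs hRt) (key hCs hCt))

lemma isCompl_filter_lt_filter_le (k : ℕ) :
    IsCompl (univ.filter fun x : Fin N => (x : ℕ) < k) (univ.filter fun x => k ≤ (x : ℕ)) := by
  refine ⟨disjoint_filter.2 fun _ _ => not_le.2, codisjoint_iff.2 ?_⟩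
  ext x
  simp [lt_or_ge]

lemma mem_entriesFinset {μ : YoungDiagram} {s : ↥μ.cells → Fin N} {x : Fin N} :
    x ∈ entriesFinset μ s ↔ ∃ c, s c = x := by
  simp [entriesFinset]

lemma sumElim_bijective {lam mu : YoungDiagram} {s : ↥lam.cells → Fin N}
    {t : ↥mu.cells → Fin N} (hs : Function.Injective s) (ht : Function.Injective t)
    (hst : IsCompl (entriesFinset lam s) (entriesFinset mu t)) :
    Function.Bijective (Sum.elim s t) := by
  refine ⟨hs.sumElim ht fun a b hab => disjoint_left.1 hst.disjoint
    (mem_entriesFinset.2 ⟨a, rfl⟩) (mem_entriesFinset.2 ⟨b, hab.symm⟩), fun x => ?_⟩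
  have hx : x ∈ entriesFinset lam s ⊔ entriesFinset mu t := by
    rw [codisjoint_iff.1 hst.codisjoint]
    exact mem_univ x
  rcases mem_union.1 hx with hx | hx
  · obtain ⟨c, rfl⟩ := mem_entriesFinset.1 hx
    exact ⟨.inl c, rfl⟩
  · obtain ⟨c, rfl⟩ := mem_entriesFinset.1 hx
    exact ⟨.inr c, rfl⟩

end YS

open YS Finset in
theorem coeffGcd_youngSym_product_symm_general (n m : ℕ) (lam mu : YoungDiagram)
    (s : ↥lam.cells → Fin (n + m)) (t : ↥mu.cells → Fin (n + m))
    (u : ↥mu.cells → Fin (n + m)) (v : ↥lam.cells → Fin (n + m))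
    (hs : Function.Injective s) (ht : Function.Injective t)
    (hu : Function.Injective u) (hv : Function.Injective v)
    (hsval : entriesFinset lam s = univ.filter (fun x : Fin (n + m) => (x : ℕ) < n))
    (htval : entriesFinset mu t = univ.filter (fun x : Fin (n + m) => n ≤ (x : ℕ)))
    (huval : entriesFinset mu u = univ.filter (fun x : Fin (n + m) => (x : ℕ) < m))
    (hvval : entriesFinset lam v = univ.filter (fun x : Fin (n + m) => m ≤ (x : ℕ))) :
    coeffGcd (youngSym lam s * youngSym mu t * combYoungSym lam mu s t) =
      coeffGcd (youngSym mu u * youngSym lam v * combYoungSym mu lam u v) := by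
  have hst : IsCompl (entriesFinset lam s) (entriesFinset mu t) :=
    hsval ▸ htval ▸ isCompl_filter_lt_filter_le n
  have hvu : IsCompl (entriesFinset lam v) (entriesFinset mu u) :=
    (huval ▸ hvval ▸ isCompl_filter_lt_filter_le m).symm
  let est := Equiv.ofBijective _ (sumElim_bijective hs ht hst)
  let evu := Equiv.ofBijective _ (sumElim_bijective hv hu hvu)
  have hπ : est.symm.trans evu ∘ Sum.elim s t = Sum.elim v u :=
    funext fun c => congrArg evu (est.symm_apply_apply c)
  obtain ⟨hvπ, huπ⟩ := Sum.elim_eq_iff.1 ((Sum.comp_elim _ _ _).symm.trans hπ)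
  rw [← hvπ, ← huπ, youngSym_comp, youngSym_comp, combYoungSym_comp, ← map_mul, ← map_mul,
    coeffGcd_domCongr, combYoungSym_comm, (commute_youngSym hst.disjoint).eq]

open YS Finset in
/-- `θ_{λ,μ} = θ_{μ,λ}`. -/
theorem coeffGcd_youngSym_product_symm (n m : ℕ) (lam mu : YoungDiagram)
    (hlam : lam.card = n) (hmu : mu.card = m)
    (s : ↥lam.cells → Fin (n + m)) (t : ↥mu.cells → Fin (n + m))
    (u : ↥mu.cells → Fin (n + m)) (v : ↥lam.cells → Fin (n + m))
    (hs : Function.Injective s) (ht : Function.Injective t)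
    (hu : Function.Injective u) (hv : Function.Injective v)
    (hsval : entriesFinset lam s = univ.filter (fun x : Fin (n + m) => (x : ℕ) < n))
    (htval : entriesFinset mu t = univ.filter (fun x : Fin (n + m) => n ≤ (x : ℕ)))
    (huval : entriesFinset mu u = univ.filter (fun x : Fin (n + m) => (x : ℕ) < m))
    (hvval : entriesFinset lam v = univ.filter (fun x : Fin (n + m) => m ≤ (x : ℕ))) :
    coeffGcd (youngSym lam s * youngSym mu t * combYoungSym lam mu s t) =
      coeffGcd (youngSym mu u * youngSym lam v * combYoungSym mu lam u v) :=
  coeffGcd_youngSym_product_symm_general n m lam mu s t u v hs ht hu hv hsval htval huval hvval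
end

section
/- Let λ = (1^n) and μ = (m). Then θ_{λ,μ} = m!·(n−1)!, i.e., the gcd of the coefficients of Y_{T^λ} Y_{(T^μ)^{+n}} Y_{T^λ + T^μ} in ℤS_{n+m} equals m!(n−1)!. -/
open Finset Equiv MonoidAlgebra

/-- The column Young diagram `(1^n)`. -/
def colYD (n : ℕ) : YoungDiagram where
  cells := Finset.range n ×ˢ {0}
  isLowerSet := by
    rintro ⟨i2, j2⟩ ⟨i1, j1⟩ ⟨hi, hj⟩ h
    simp only [Finset.coe_product, Set.mem_prod, Finset.mem_coe, Finset.mem_range,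
      Finset.mem_singleton] at h ⊢
    omega

/-- The row Young diagram `(m)`. -/
def rowYD (m : ℕ) : YoungDiagram where
  cells := ({0} : Finset ℕ) ×ˢ Finset.range m
  isLowerSet := by
    rintro ⟨i2, j2⟩ ⟨i1, j1⟩ ⟨hi, hj⟩ h
    simp only [Finset.coe_product, Set.mem_prod, Finset.mem_coe, Finset.mem_range,
      Finset.mem_singleton] at h ⊢
    omega

/-- The tableau `T^{(1^n)}` of shape `(1^n)` with entries `0, 1, …, n-1` (in `Fin (n+m)`),
reading down the unique column. -/
def colTab (n m : ℕ) : ↥(colYD n).cells → Fin (n + m) := fun c =>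
  ⟨c.val.1, by
    have h := c.property
    simp only [colYD, Finset.mem_product, Finset.mem_range, Finset.mem_singleton] at h
    omega⟩

/-- The tableau `(T^{(m)})^{+n}` of shape `(m)` with entries `n, n+1, …, n+m-1`. -/
def rowTabShift (n m : ℕ) : ↥(rowYD m).cells → Fin (n + m) := fun c =>
  ⟨n + c.val.2, by
    have h := c.property
    simp only [rowYD, Finset.mem_product, Finset.mem_range, Finset.mem_singleton] at h
    omega⟩

/-!
Put `A = {0, …, n-1}` and `B = {n, …, n+m-1}`. Then `Y_{T^λ} = [S_A]`,
`Y_{(T^μ)^{+n}} = {S_B}` and `Y_{T^λ+T^μ} = {S_{0 ∪ B}}[S_A]`. Since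
`{S_B}{S_{0 ∪ B}} = m!{S_{0 ∪ B}}`, the coset decomposition `{S_{0 ∪ B}} = ∑_{c ∈ 0 ∪ B} (0 c){S_B}`
and `[S_A](0 b)[S_A] = (n-1)! ∑_{a ∈ A} (a b)[S_A]` for `b ∈ B` turn the product into
`m!(n-1)! W` with `W = (n + ∑_{a ∈ A, b ∈ B} (a b))[S_A]{S_B}`. Every permutation in the support
of `[S_A]{S_B}` maps `A` into `A`, and its coefficient at the identity is `1`; so the coefficient
of `(0 n)` in `W` is `1`, and the gcd is exactly `m!(n-1)!`.
-/

open scoped Nat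

namespace YS

section PermsOn

variable {α : Type*} [Fintype α] [DecidableEq α] {s t : Finset α} {σ τ g : Perm α} {x : α}

def permsOn (s : Finset α) : Finset (Perm α) :=
  univ.filter fun σ => ∀ x ∉ s, σ x = x

theorem mem_permsOn : σ ∈ permsOn s ↔ ∀ x ∉ s, σ x = x := by
  simp [permsOn]

theorem one_mem_permsOn : (1 : Perm α) ∈ permsOn s :=
  mem_permsOn.2 fun _ _ => rfl

theorem mul_mem_permsOn (hσ : σ ∈ permsOn s) (hτ : τ ∈ permsOn s) : σ * τ ∈ permsOn s :=
  mem_permsOn.2 fun x hx => by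
    rw [Perm.mul_apply, mem_permsOn.1 hτ x hx, mem_permsOn.1 hσ x hx]

theorem inv_mem_permsOn (hσ : σ ∈ permsOn s) : σ⁻¹ ∈ permsOn s :=
  mem_permsOn.2 fun x hx => by
    rw [Perm.inv_eq_iff_eq, mem_permsOn.1 hσ x hx]

theorem swap_mem_permsOn {a b : α} (ha : a ∈ s) (hb : b ∈ s) : swap a b ∈ permsOn s :=
  mem_permsOn.2 fun _ hx => swap_apply_of_ne_of_ne (ne_of_mem_of_not_mem ha hx).symm
    (ne_of_mem_of_not_mem hb hx).symm

theorem permsOn_mono (h : s ⊆ t) : permsOn s ⊆ permsOn t :=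
  fun _ hσ => mem_permsOn.2 fun x hx => mem_permsOn.1 hσ x fun hxs => hx (h hxs)

theorem apply_mem_of_mem_permsOn (hσ : σ ∈ permsOn s) (hx : x ∈ s) : σ x ∈ s := by
  by_contra h
  exact h (by rwa [σ.injective (mem_permsOn.1 hσ _ h)])

theorem card_permsOn (s : Finset α) : #(permsOn s) = (#s)! := by
  have e : {σ // σ ∈ permsOn s} ≃ Perm {x // x ∈ s} :=
    (subtypeEquivRight fun σ => by simp [mem_permsOn]).trans
      (Perm.subtypeEquivSubtypePerm _).symm
  rw [← Fintype.card_coe, Fintype.card_congr e, Fintype.card_perm, Fintype.card_coe]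

theorem commute_of_mem_permsOn (hst : Disjoint s t) (hσ : σ ∈ permsOn s)
    (hτ : τ ∈ permsOn t) : Commute σ τ := by
  ext x
  simp only [Perm.mul_apply]
  by_cases hxs : x ∈ s
  · rw [mem_permsOn.1 hτ x (disjoint_left.1 hst hxs),
      mem_permsOn.1 hτ _ (disjoint_left.1 hst (apply_mem_of_mem_permsOn hσ hxs))]
  by_cases hxt : x ∈ t
  · rw [mem_permsOn.1 hσ x hxs,
      mem_permsOn.1 hσ _ (disjoint_right.1 hst (apply_mem_of_mem_permsOn hτ hxt))]
  · rw [mem_permsOn.1 hσ x hxs, mem_permsOn.1 hτ x hxt, mem_permsOn.1 hσ x hxs]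

theorem eq_one_of_mem_permsOn_of_disjoint (hst : Disjoint s t) (hs : σ ∈ permsOn s)
    (ht : σ ∈ permsOn t) : σ = 1 := by
  ext x
  by_cases hx : x ∈ s
  · exact mem_permsOn.1 ht x (disjoint_left.1 hst hx)
  · exact mem_permsOn.1 hs x hx

theorem sum_permsOn_mul_left {M : Type*} [AddCommMonoid M] (hg : g ∈ permsOn s)
    (f : Perm α → M) : ∑ σ ∈ permsOn s, f (g * σ) = ∑ σ ∈ permsOn s, f σ :=
  sum_nbij' (g * ·) (g⁻¹ * ·) (fun _ hσ => mul_mem_permsOn hg hσ)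
    (fun _ hσ => mul_mem_permsOn (inv_mem_permsOn hg) hσ) (fun _ _ => by simp)
    (fun _ _ => by simp) fun _ _ => rfl

/-- Every `σ` supported on `insert x s` factors uniquely as `swap x (σ x) * β` with `β`
supported on `s`. -/
theorem sum_permsOn_insert {M : Type*} [AddCommMonoid M] (hx : x ∉ s) (f : Perm α → M) :
    ∑ σ ∈ permsOn (insert x s), f σ =
      ∑ c ∈ insert x s, ∑ β ∈ permsOn s, f (swap x c * β) := by
  rw [← sum_product']
  refine sum_nbij' (fun σ => (σ x, swap x (σ x) * σ)) (fun p => swap x p.1 * p.2)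
    ?_ ?_ (fun _ _ => by simp) ?_ (fun _ _ => by simp)
  · intro σ hσ
    refine mem_product.2 ⟨apply_mem_of_mem_permsOn hσ (mem_insert_self x s), ?_⟩
    refine mem_permsOn.2 fun y hy => ?_
    by_cases hyx : y = x
    · simp [hyx]
    have hσy : σ y = y := mem_permsOn.1 hσ y (by simp [hyx, hy])
    rw [Perm.mul_apply, hσy, swap_apply_of_ne_of_ne hyx fun h => hyx (σ.injective (hσy.trans h))]
  · intro p hp
    obtain ⟨hc, hβ⟩ := mem_product.1 hp
    exact mul_mem_permsOn (swap_mem_permsOn (mem_insert_self x s) hc)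
      (permsOn_mono (subset_insert x s) hβ)
  · rintro ⟨c, β⟩ hp
    have hβx : β x = x := mem_permsOn.1 (mem_product.1 hp).2 x hx
    simp [hβx]

theorem sum_permsOn_apply {M : Type*} [AddCommMonoid M] (hx : x ∈ s) (f : α → M) :
    ∑ σ ∈ permsOn s, f (σ x) = (#s - 1)! • ∑ a ∈ s, f a := by
  conv_lhs => rw [← insert_erase hx]
  rw [sum_permsOn_insert (notMem_erase x s), insert_erase hx, smul_sum]
  refine sum_congr rfl fun c _ => ?_
  have hfix : ∀ β ∈ permsOn (s.erase x), (swap x c * β) x = c := fun β hβ => by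
    rw [Perm.mul_apply, mem_permsOn.1 hβ x (notMem_erase x s), swap_apply_left]
  rw [sum_congr rfl fun β hβ => congrArg f (hfix β hβ), sum_const, card_permsOn,
    card_erase_of_mem hx]

end PermsOn

section GroupAlgebra

variable {N : ℕ} {s t : Finset (Fin N)} {g π : Perm (Fin N)} {x y b : Fin N}

theorem single_one_mul_sumElt_permsOn (hg : g ∈ permsOn s) :
    single g 1 * sumElt (permsOn s) = sumElt (permsOn s) := by
  simp only [sumElt, mul_sum, single_mul_single, one_mul]
  exact sum_permsOn_mul_left hg fun σ => single σ 1

theorem single_sign_mul_altElt_permsOn (hg : g ∈ permsOn s) :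
    single g ((Perm.sign g : ℤˣ) : ℤ) * altElt (permsOn s) = altElt (permsOn s) := by
  simp only [altElt, mul_sum, single_mul_single, ← Units.val_mul, ← Perm.sign_mul]
  exact sum_permsOn_mul_left hg fun σ => single σ ((Perm.sign σ : ℤˣ) : ℤ)

theorem sumElt_singleton_one : sumElt ({1} : Finset (Perm (Fin N))) = 1 := by
  simp [sumElt, MonoidAlgebra.one_def]

theorem altElt_singleton_one : altElt ({1} : Finset (Perm (Fin N))) = 1 := by
  simp [altElt, MonoidAlgebra.one_def]

theorem sumElt_permsOn_mul_of_subset (h : s ⊆ t) :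
    sumElt (permsOn s) * sumElt (permsOn t) = (#s)! • sumElt (permsOn t) := by
  rw [sumElt, sum_mul, sum_congr rfl fun g hg => single_one_mul_sumElt_permsOn (permsOn_mono h hg),
    sum_const, card_permsOn]

theorem altElt_permsOn_mul_self :
    altElt (permsOn s) * altElt (permsOn s) = (#s)! • altElt (permsOn s) := by
  nth_rw 1 [altElt]
  rw [sum_mul, sum_congr rfl fun g hg => single_sign_mul_altElt_permsOn hg, sum_const,
    card_permsOn]

theorem commute_sumElt_altElt_permsOn (hst : Disjoint s t) :
    Commute (sumElt (permsOn t)) (altElt (permsOn s)) := by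
  unfold sumElt altElt
  exact Commute.sum_left _ _ _ fun _ hτ => Commute.sum_right _ _ _ fun _ hσ =>
    single_commute_single (commute_of_mem_permsOn hst hσ hτ).symm (.all _ _)

theorem sumElt_permsOn_insert (hx : x ∉ s) :
    sumElt (permsOn (insert x s)) =
      (∑ c ∈ insert x s, single (swap x c) 1) * sumElt (permsOn s) := by
  rw [sumElt, sumElt, sum_mul]
  simp only [mul_sum, single_mul_single, one_mul]
  exact sum_permsOn_insert hx fun σ => single σ (1 : ℤ)

/-- Conjugating `swap x b` by `σ ∈ S_s` gives `swap (σ x) b`, so the double coset sum only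
depends on where `x` is sent. -/
theorem altElt_mul_swap_mul_altElt (hx : x ∈ s) (hb : b ∉ s) :
    altElt (permsOn s) * single (swap x b) 1 * altElt (permsOn s) =
      (#s - 1)! • ((∑ a ∈ s, single (swap a b) 1) * altElt (permsOn s)) := by
  have key : ∀ σ ∈ permsOn s,
      single σ ((Perm.sign σ : ℤˣ) : ℤ) * single (swap x b) 1 * altElt (permsOn s) =
        single (swap (σ x) b) 1 * altElt (permsOn s) := fun σ hσ => by
    have hconj : σ * swap x b = swap (σ x) b * σ := by
      rw [← mem_permsOn.1 hσ b hb, swap_apply_apply, mem_permsOn.1 hσ b hb]; group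
    rw [single_mul_single, mul_one, hconj, ← one_mul ((Perm.sign σ : ℤˣ) : ℤ),
      ← single_mul_single, mul_assoc, single_sign_mul_altElt_permsOn hσ]
  nth_rw 1 [altElt]
  rw [sum_mul, sum_mul, sum_congr rfl key,
    sum_permsOn_apply hx fun a => single (swap a b) 1 * altElt (permsOn s), sum_mul]

theorem altElt_mul_sumElt_insert_mul_altElt (hst : Disjoint s t) (hx : x ∈ s) :
    altElt (permsOn s) * sumElt (permsOn (insert x t)) * altElt (permsOn s) =
      (#s - 1)! • ((#s • 1 + ∑ b ∈ t, ∑ a ∈ s, single (swap a b) 1) *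
        (altElt (permsOn s) * sumElt (permsOn t))) := by
  have hxt : x ∉ t := disjoint_left.1 hst hx
  calc altElt (permsOn s) * sumElt (permsOn (insert x t)) * altElt (permsOn s)
      = (∑ c ∈ insert x t, altElt (permsOn s) * single (swap x c) 1 * altElt (permsOn s)) *
          sumElt (permsOn t) := by
        rw [sumElt_permsOn_insert hxt, mul_assoc, mul_assoc,
          (commute_sumElt_altElt_permsOn hst).eq, ← mul_assoc, ← mul_assoc, mul_sum, sum_mul]
    _ = ((#s)! • altElt (permsOn s) +
          ∑ b ∈ t, (#s - 1)! • ((∑ a ∈ s, single (swap a b) 1) * altElt (permsOn s))) *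
          sumElt (permsOn t) := by
        rw [sum_insert hxt, swap_self, ← Perm.one_def, ← MonoidAlgebra.one_def, mul_one,
          altElt_permsOn_mul_self,
          sum_congr rfl fun b hb => altElt_mul_swap_mul_altElt hx (disjoint_right.1 hst hb)]
    _ = _ := by
        rw [← Nat.mul_factorial_pred (card_ne_zero_of_mem hx)]
        simp only [add_mul, sum_mul, smul_mul_assoc, one_mul, mul_assoc, smul_add, smul_sum,
          mul_smul, mul_comm (#s)]

theorem altElt_mul_sumElt_mul_sumElt_insert_mul_altElt (hst : Disjoint s t) (hx : x ∈ s) :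
    altElt (permsOn s) * sumElt (permsOn t) *
        (sumElt (permsOn (insert x t)) * altElt (permsOn s)) =
      ((#t)! * (#s - 1)!) • ((#s • 1 + ∑ b ∈ t, ∑ a ∈ s, single (swap a b) 1) *
        (altElt (permsOn s) * sumElt (permsOn t))) := by
  rw [mul_assoc, ← mul_assoc (sumElt _), sumElt_permsOn_mul_of_subset (subset_insert x t),
    smul_mul_assoc, mul_smul_comm, ← mul_assoc, altElt_mul_sumElt_insert_mul_altElt hst hx,
    mul_smul]

theorem coeff_altElt_mul_sumElt_eq_zero (hx : x ∈ s) (hxt : x ∉ t) (hπ : π x ∉ s) :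
    (altElt (permsOn s) * sumElt (permsOn t)).coeff π = 0 := by
  simp only [altElt, sumElt, sum_mul_sum, single_mul_single, mul_one, coeff_sum,
    Finsupp.finsetSum_apply, coeff_single, Finsupp.single_apply]
  refine sum_eq_zero fun α hα => sum_eq_zero fun β hβ => if_neg fun h => hπ ?_
  rw [← h, Perm.mul_apply, mem_permsOn.1 hβ x hxt]
  exact apply_mem_of_mem_permsOn hα hx

theorem coeff_altElt_mul_sumElt_one (hst : Disjoint s t) :
    (altElt (permsOn s) * sumElt (permsOn t)).coeff 1 = 1 := by
  simp only [altElt, sumElt, sum_mul_sum, single_mul_single, mul_one, coeff_sum,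
    Finsupp.finsetSum_apply, coeff_single, Finsupp.single_apply]
  rw [sum_eq_single_of_mem 1 one_mem_permsOn, sum_eq_single_of_mem 1 one_mem_permsOn]
  · simp
  · intro β _ hβ
    rw [one_mul, if_neg hβ]
  · intro α hα hα1
    refine sum_eq_zero fun β hβ => if_neg fun h => hα1 ?_
    exact eq_one_of_mem_permsOn_of_disjoint hst hα
      (mul_eq_one_iff_eq_inv.1 h ▸ inv_mem_permsOn hβ)

theorem coeff_swap_mul_altElt_mul_sumElt (hst : Disjoint s t) (hx : x ∈ s) (hy : y ∈ t) :
    ((#s • 1 + ∑ b ∈ t, ∑ a ∈ s, single (swap a b) 1) *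
      (altElt (permsOn s) * sumElt (permsOn t))).coeff (swap x y) = 1 := by
  have hD : ∀ π z, z ∈ s → π z ∉ s →
      (altElt (permsOn s) * sumElt (permsOn t)).coeff π = 0 :=
    fun _ _ hz => coeff_altElt_mul_sumElt_eq_zero hz (disjoint_left.1 hst hz)
  have hys : y ∉ s := disjoint_right.1 hst hy
  have hswap_fix : ∀ a ∈ s, a ≠ x → swap x y a = a := fun a ha hax =>
    swap_apply_of_ne_of_ne hax (ne_of_mem_of_not_mem ha hys)
  simp only [add_mul, smul_mul_assoc, one_mul, sum_mul, coeff_add, coeff_smul, coeff_sum,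
    Finsupp.coe_add, Pi.add_apply, Finsupp.coe_smul, Pi.smul_apply, Finsupp.finsetSum_apply,
    coeff_single_mul_apply, swap_inv]
  rw [hD _ x hx (by rwa [swap_apply_left]), smul_zero, zero_add, sum_eq_single_of_mem y hy,
    sum_eq_single_of_mem x hx, swap_mul_self, coeff_altElt_mul_sumElt_one hst]
  · intro a ha hax
    exact hD _ a ha (by rwa [Perm.mul_apply, hswap_fix a ha hax, swap_apply_left])
  · intro b hb hby
    refine sum_eq_zero fun a ha => hD _ a ha ?_
    by_cases hax : a = x
    · subst hax
      rwa [Perm.mul_apply, swap_apply_left,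
        swap_apply_of_ne_of_ne (ne_of_mem_of_not_mem ha hys).symm fun h => hby h.symm]
    · rw [Perm.mul_apply, hswap_fix a ha hax, swap_apply_left]
      exact disjoint_right.1 hst hb

theorem coeffGcd_eq_gcd_univ (f : MonoidAlgebra ℤ (Perm (Fin N))) :
    coeffGcd f = univ.gcd f.coeff := by
  rw [coeffGcd, gcd_eq_gcd_filter_ne_zero (s := univ)]
  congr 1
  ext
  simp

theorem coeffGcd_smul (c : ℤ) (f : MonoidAlgebra ℤ (Perm (Fin N))) :
    coeffGcd (c • f) = |c| * coeffGcd f := by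
  rw [coeffGcd_eq_gcd_univ, coeffGcd_eq_gcd_univ, Int.abs_eq_normalize, ← Finset.gcd_mul_left]
  rfl

theorem coeffGcd_eq_one_of_coeff_eq_one {f : MonoidAlgebra ℤ (Perm (Fin N))}
    (h : f.coeff π = 1) : coeffGcd f = 1 := by
  rw [coeffGcd_eq_gcd_univ, ← Finset.normalize_gcd, normalize_eq_one]
  exact isUnit_of_dvd_one (h ▸ Finset.gcd_dvd (mem_univ π))

end GroupAlgebra

section Stabilizers

variable {N : ℕ} {μ ν : YoungDiagram} {s : ↥μ.cells → Fin N} {t : ↥ν.cells → Fin N}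
  {σ : Perm (Fin N)}

theorem mem_rowStab : σ ∈ rowStab μ s ↔ σ ∈ permsOn (entriesFinset μ s) ∧
    ∀ i ∈ μ.cells.image Prod.fst, ∀ x ∈ rowFinset μ s i, σ x ∈ rowFinset μ s i := by
  simp [rowStab, mem_permsOn]

theorem mem_colStab : σ ∈ colStab μ s ↔ σ ∈ permsOn (entriesFinset μ s) ∧
    ∀ j ∈ μ.cells.image Prod.snd, ∀ x ∈ colFinset μ s j, σ x ∈ colFinset μ s j := by
  simp [colStab, mem_permsOn]

theorem mem_combRowStab : σ ∈ combRowStab μ ν s t ↔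
    σ ∈ permsOn (entriesFinset μ s ∪ entriesFinset ν t) ∧
    ∀ i ∈ μ.cells.image Prod.fst ∪ ν.cells.image Prod.fst,
      ∀ x ∈ rowFinset μ s i ∪ rowFinset ν t i,
        σ x ∈ rowFinset μ s i ∪ rowFinset ν t i := by
  simp only [combRowStab, mem_filter, mem_univ, true_and, mem_permsOn]

theorem mem_combColStab : σ ∈ combColStab μ ν s t ↔
    σ ∈ permsOn (entriesFinset μ s ∪ entriesFinset ν t) ∧
    (∀ j ∈ μ.cells.image Prod.snd, ∀ x ∈ colFinset μ s j, σ x ∈ colFinset μ s j) ∧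
    (∀ j ∈ ν.cells.image Prod.snd, ∀ x ∈ colFinset ν t j, σ x ∈ colFinset ν t j) := by
  simp only [combColStab, mem_filter, mem_univ, true_and, mem_permsOn]

end Stabilizers

end YS

open YS

section Tableaux

variable {n m : ℕ} {x : Fin (n + m)} {i j : ℕ}

theorem mem_colYD : (i, j) ∈ colYD n ↔ i < n ∧ j = 0 := by
  rw [← YoungDiagram.mem_cells]
  simp [colYD, eq_comm]

theorem mem_rowYD : (i, j) ∈ rowYD m ↔ i = 0 ∧ j < m := by
  rw [← YoungDiagram.mem_cells]
  simp [rowYD, eq_comm, and_comm]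

theorem exists_add_eq_val_iff : (∃ j < m, n + j = x) ↔ n ≤ x :=
  ⟨fun ⟨_, _, h⟩ => h ▸ Nat.le_add_right _ _, fun _ => ⟨x - n, by omega, by omega⟩⟩

theorem entriesFinset_colTab :
    entriesFinset (colYD n) (colTab n m) = ({x | (x : ℕ) < n} : Finset (Fin (n + m))) := by
  ext
  simp [entriesFinset, colTab, mem_colYD, Fin.ext_iff]

theorem entriesFinset_rowTabShift :
    entriesFinset (rowYD m) (rowTabShift n m) = ({x | n ≤ (x : ℕ)} : Finset (Fin (n + m))) := by
  ext
  simp [entriesFinset, rowTabShift, mem_rowYD, Fin.ext_iff, exists_add_eq_val_iff]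

theorem mem_rowFinset_colTab :
    x ∈ rowFinset (colYD n) (colTab n m) i ↔ (x : ℕ) = i ∧ i < n := by
  simp [rowFinset, colTab, mem_colYD, Fin.ext_iff, eq_comm, and_comm]

theorem mem_colFinset_colTab :
    x ∈ colFinset (colYD n) (colTab n m) j ↔ (x : ℕ) < n ∧ j = 0 := by
  simp [colFinset, colTab, mem_colYD, Fin.ext_iff]

theorem mem_rowFinset_rowTabShift :
    x ∈ rowFinset (rowYD m) (rowTabShift n m) i ↔ n ≤ (x : ℕ) ∧ i = 0 := by
  simp [rowFinset, rowTabShift, mem_rowYD, Fin.ext_iff, and_assoc, exists_add_eq_val_iff]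
  exact and_comm

theorem mem_colFinset_rowTabShift :
    x ∈ colFinset (rowYD m) (rowTabShift n m) j ↔ (x : ℕ) = n + j ∧ j < m := by
  simp [colFinset, rowTabShift, mem_rowYD, Fin.ext_iff, eq_comm, and_comm]

theorem rowStab_colTab : rowStab (colYD n) (colTab n m) = {1} := by
  ext σ
  rw [mem_rowStab, mem_singleton, entriesFinset_colTab, mem_permsOn]
  refine ⟨fun ⟨hout, hrow⟩ => Perm.ext fun x => ?_,
    fun h => h ▸ ⟨fun _ _ => rfl, fun _ _ _ => id⟩⟩
  by_cases hx : (x : ℕ) < n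
  · have hi := mem_image_of_mem Prod.fst ((YoungDiagram.mem_cells _).2 (mem_colYD.2 ⟨hx, rfl⟩))
    exact Fin.ext (mem_rowFinset_colTab.1 (hrow _ hi x (mem_rowFinset_colTab.2 ⟨rfl, hx⟩))).1
  · exact hout x (by simpa using hx)

theorem colStab_rowTabShift : colStab (rowYD m) (rowTabShift n m) = {1} := by
  ext σ
  rw [mem_colStab, mem_singleton, entriesFinset_rowTabShift, mem_permsOn]
  refine ⟨fun ⟨hout, hcol⟩ => Perm.ext fun x => ?_,
    fun h => h ▸ ⟨fun _ _ => rfl, fun _ _ _ => id⟩⟩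
  by_cases hx : n ≤ (x : ℕ)
  · have hj := mem_image_of_mem Prod.snd
      ((YoungDiagram.mem_cells _).2 (mem_rowYD.2 ⟨rfl, show (x : ℕ) - n < m by omega⟩))
    have := mem_colFinset_rowTabShift.1
      (hcol _ hj x (mem_colFinset_rowTabShift.2 ⟨by omega, by omega⟩))
    rw [Perm.one_apply]
    exact Fin.ext (by omega)
  · exact hout x (by simpa using hx)

theorem colStab_colTab :
    colStab (colYD n) (colTab n m) = permsOn {x : Fin (n + m) | (x : ℕ) < n} := by
  ext σ
  rw [mem_colStab, entriesFinset_colTab]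
  refine ⟨And.left, fun hσ => ⟨hσ, fun _ _ x hx => ?_⟩⟩
  rw [mem_colFinset_colTab] at hx ⊢
  exact ⟨by simpa using apply_mem_of_mem_permsOn hσ (by simpa using hx.1), hx.2⟩

theorem rowStab_rowTabShift :
    rowStab (rowYD m) (rowTabShift n m) = permsOn {x : Fin (n + m) | n ≤ (x : ℕ)} := by
  ext σ
  rw [mem_rowStab, entriesFinset_rowTabShift]
  refine ⟨And.left, fun hσ => ⟨hσ, fun _ _ x hx => ?_⟩⟩
  rw [mem_rowFinset_rowTabShift] at hx ⊢
  exact ⟨by simpa using apply_mem_of_mem_permsOn hσ (by simpa using hx.1), hx.2⟩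

theorem combRowStab_colTab_rowTabShift :
    combRowStab (colYD n) (rowYD m) (colTab n m) (rowTabShift n m) =
      permsOn {x : Fin (n + m) | (x : ℕ) = 0 ∨ n ≤ (x : ℕ)} := by
  ext σ
  rw [mem_combRowStab, entriesFinset_colTab, entriesFinset_rowTabShift]
  constructor
  · rintro ⟨-, hrow⟩
    refine mem_permsOn.2 fun x hx => Fin.ext ?_
    simp only [mem_filter, mem_univ, true_and, not_or, not_le] at hx
    have hi := mem_image_of_mem Prod.fst
      ((YoungDiagram.mem_cells _).2 (mem_colYD.2 ⟨hx.2, rfl⟩))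
    have := hrow _ (mem_union_left _ hi) x
      (mem_union_left _ (mem_rowFinset_colTab.2 ⟨rfl, hx.2⟩))
    simp only [mem_union, mem_rowFinset_colTab, mem_rowFinset_rowTabShift] at this
    omega
  · intro hσ
    refine ⟨permsOn_mono (fun x _ => by simp; omega) hσ, fun i _ x hx => ?_⟩
    simp only [mem_union, mem_rowFinset_colTab, mem_rowFinset_rowTabShift] at hx ⊢
    by_cases hxC : (x : ℕ) = 0 ∨ n ≤ (x : ℕ)
    · have := apply_mem_of_mem_permsOn hσ (by simpa using hxC)
      simp only [mem_filter, mem_univ, true_and] at this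
      omega
    · rwa [mem_permsOn.1 hσ x (by simpa using hxC)]

theorem combColStab_colTab_rowTabShift :
    combColStab (colYD n) (rowYD m) (colTab n m) (rowTabShift n m) =
      permsOn {x : Fin (n + m) | (x : ℕ) < n} := by
  ext σ
  rw [mem_combColStab, entriesFinset_colTab, entriesFinset_rowTabShift]
  constructor
  · rintro ⟨-, -, hcol⟩
    refine mem_permsOn.2 fun x hx => Fin.ext ?_
    simp only [mem_filter, mem_univ, true_and, not_lt] at hx
    have hj := mem_image_of_mem Prod.snd
      ((YoungDiagram.mem_cells _).2 (mem_rowYD.2 ⟨rfl, show (x : ℕ) - n < m by omega⟩))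
    have := mem_colFinset_rowTabShift.1
      (hcol _ hj x (mem_colFinset_rowTabShift.2 ⟨by omega, by omega⟩))
    omega
  · intro hσ
    refine ⟨permsOn_mono (fun x _ => by simp; omega) hσ, fun _ _ x hx => ?_,
      fun _ _ x hx => ?_⟩
    · rw [mem_colFinset_colTab] at hx ⊢
      exact ⟨by simpa using apply_mem_of_mem_permsOn hσ (by simpa using hx.1), hx.2⟩
    · rwa [mem_permsOn.1 hσ x (by simp [(mem_colFinset_rowTabShift.1 hx).1])]

theorem youngSym_colTab :
    youngSym (colYD n) (colTab n m) = altElt (permsOn {x : Fin (n + m) | (x : ℕ) < n}) := by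
  rw [youngSym, rowStab_colTab, colStab_colTab, sumElt_singleton_one, one_mul]

theorem youngSym_rowTabShift :
    youngSym (rowYD m) (rowTabShift n m) =
      sumElt (permsOn {x : Fin (n + m) | n ≤ (x : ℕ)}) := by
  rw [youngSym, rowStab_rowTabShift, colStab_rowTabShift, altElt_singleton_one, mul_one]

theorem combYoungSym_colTab_rowTabShift :
    combYoungSym (colYD n) (rowYD m) (colTab n m) (rowTabShift n m) =
      sumElt (permsOn {x : Fin (n + m) | (x : ℕ) = 0 ∨ n ≤ (x : ℕ)}) *
        altElt (permsOn {x : Fin (n + m) | (x : ℕ) < n}) := by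
  rw [combYoungSym, combRowStab_colTab_rowTabShift, combColStab_colTab_rowTabShift]

theorem card_filter_val_lt_self : #({x | (x : ℕ) < n} : Finset (Fin (n + m))) = n := by
  simp [Fin.card_filter_val_lt]

theorem card_filter_le_val : #({x | n ≤ (x : ℕ)} : Finset (Fin (n + m))) = m := by
  have := card_filter_add_card_filter_not (s := (univ : Finset (Fin (n + m))))
    fun x => (x : ℕ) < n
  simp only [card_filter_val_lt_self, not_lt, card_univ, Fintype.card_fin] at this
  omega

end Tableaux

open YS in
/-- `θ_{(1^n),(m)} = m!(n-1)!`. -/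
theorem theta_column_row (n m : ℕ) (hn : 0 < n) (hm : 0 < m) :
    coeffGcd (youngSym (colYD n) (colTab n m) * youngSym (rowYD m) (rowTabShift n m) *
        combYoungSym (colYD n) (rowYD m) (colTab n m) (rowTabShift n m)) =
      (m.factorial * (n - 1).factorial : ℤ) := by
  rw [youngSym_colTab, youngSym_rowTabShift, combYoungSym_colTab_rowTabShift]
  set A : Finset (Fin (n + m)) := {x | (x : ℕ) < n}
  set B : Finset (Fin (n + m)) := {x | n ≤ (x : ℕ)}
  let x : Fin (n + m) := ⟨0, by omega⟩
  let y : Fin (n + m) := ⟨n, by omega⟩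
  have hx : x ∈ A := by simpa [A, x]
  have hy : y ∈ B := by simp [B, y]
  have hdisj : Disjoint A B := disjoint_filter.2 fun _ _ => not_le.2
  have hrow : ({x | (x : ℕ) = 0 ∨ n ≤ (x : ℕ)} : Finset (Fin (n + m))) = insert x B := by
    ext
    simp [B, x, Fin.ext_iff]
  have hA : #A = n := card_filter_val_lt_self
  have hB : #B = m := card_filter_le_val
  rw [hrow, altElt_mul_sumElt_mul_sumElt_insert_mul_altElt hdisj hx, ← Nat.cast_smul_eq_nsmul ℤ,
    coeffGcd_smul, coeffGcd_eq_one_of_coeff_eq_one (coeff_swap_mul_altElt_mul_sumElt hdisj hx hy),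
    hA, hB]
  simp
end

section
/- Let k ≥ ℓ ≥ 0, m ≥ 0, and let σ ∈ S_{k+ℓ+m} lie in the product set R·C·R'·C (with A₁, A₂, A₃, R, C, R' as in the two-row setting). Suppose r = |{ i ∈ [ℓ+1,k] ∪ A₃ : σ(i) ∈ A₁ }| and s = |{ j ∈ A₂ : σ(j) ∉ A₂ and σ(j−k) ∉ A₂ }|, and that the transposition (σ(j−k), σ(j)) does not lie in R for any j ∈ A₂. Then r ≥ k − ℓ and r + s ≤ min(k, k − ℓ + m). -/
open Equiv Finset
open scoped Pointwise

/-- Block index of a value (0-indexed): `0` for `A₁ = [0,k)`, `1` for `A₂ = [k, k+ℓ)`,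
`2` for `A₃ = [k+ℓ, k+ℓ+m)`. -/
def blk (k l x : ℕ) : ℕ := if x < k then 0 else if x < k + l then 1 else 2

/-- `R = S_{A₁} × S_{A₂} × S_{A₃}`: permutations preserving each block. -/
def Rset (k l m : ℕ) : Set (Perm (Fin (k + l + m))) :=
  {σ | ∀ x, blk k l (σ x : ℕ) = blk k l (x : ℕ)}

/-- `R' = S_{A₁ ∪ A₃} × S_{A₂}`: permutations preserving `A₂` (and hence `A₁ ∪ A₃`). -/
def R'set (k l m : ℕ) : Set (Perm (Fin (k + l + m))) :=
  {σ | ∀ x, blk k l (σ x : ℕ) = 1 ↔ blk k l (x : ℕ) = 1}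

/-- `C = ⟨(j-k, j) : j ∈ A₂⟩`, the elementary abelian 2-group generated by the
transpositions `(i, k+i)` for `i < ℓ` (0-indexed). -/
def Cgrp (k l m : ℕ) : Subgroup (Perm (Fin (k + l + m))) :=
  Subgroup.closure {τ | ∃ (i : ℕ) (h : i < l),
    τ = Equiv.swap (⟨i, by omega⟩ : Fin (k + l + m)) ⟨k + i, by omega⟩}

/-
The ℓ pairs {j − k, j}, j ∈ A₂, are disjoint (ℓ ≤ k), and their complement is exactly the set
[ℓ+1,k] ∪ A₃ of k − ℓ + m positions over which r counts. Since σ sends the two ends of a pair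
to different blocks, each pair has at most one end in σ⁻¹(A₁) and at most one in σ⁻¹(A₂), and a
pair counted by s has no end in σ⁻¹(A₂), hence exactly one in σ⁻¹(A₁). Splitting
|σ⁻¹(A₁)| = k between the pairs and their complement gives r = k − (ends of pairs in σ⁻¹(A₁)),
so k − ℓ ≤ r and r + s ≤ k. Splitting |σ⁻¹(A₂)| = ℓ likewise shows that at least s positions of
the complement lie in σ⁻¹(A₂); these are disjoint from the r positions in σ⁻¹(A₁), so
r + s ≤ k − ℓ + m.
-/

theorem Finset.card_filter_map_union_map {α ι : Type*} [Fintype ι] [DecidableEq α]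
    (f g : ι ↪ α) (hfg : ∀ i j, f i ≠ g j) (p : α → Prop) [DecidablePred p] :
    #{a ∈ univ.map f ∪ univ.map g | p a} = #{i | p (f i)} + #{i | p (g i)} := by
  rw [filter_union, card_union_of_disjoint, filter_map, filter_map, card_map, card_map]
  · rfl
  · refine disjoint_filter_filter (disjoint_left.2 ?_)
    simp only [mem_map, mem_univ, true_and]
    rintro _ ⟨i, rfl⟩ ⟨j, hj⟩
    exact hfg i j hj.symm

theorem Finset.card_filter_add_card_filter_le {α : Type*} (s : Finset α) (p q : α → Prop)
    [DecidablePred p] [DecidablePred q] (hpq : ∀ a, p a → ¬q a) :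
    #{a ∈ s | p a} + #{a ∈ s | q a} ≤ #s := by
  classical
  rw [← card_union_of_disjoint (disjoint_filter.2 fun a _ => hpq a)]
  exact card_le_card (union_subset (filter_subset _ _) (filter_subset _ _))

theorem Finset.card_filter_comp_perm {α : Type*} [Fintype α] (σ : Perm α) (p : α → Prop)
    [DecidablePred p] : #{a | p (σ a)} = #{a | p a} :=
  card_equiv σ (by simp)

section PairColouring

variable {ι : Type*} [Fintype ι] {u v : ι → ℕ}

theorem card_eq_add_card_eq_le_card (huv : ∀ i, u i ≠ v i) (c : ℕ) :
    #{i | u i = c} + #{i | v i = c} ≤ Fintype.card ι := by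
  simp only [card_filter, ← sum_add_distrib]
  calc _ ≤ ∑ _ : ι, 1 := sum_le_sum fun i _ => by have := huv i; split_ifs <;> omega
    _ = Fintype.card ι := by simp

theorem card_ne_ne_le_card_eq_add_card_eq (huv : ∀ i, u i ≠ v i) (hu : ∀ i, u i < 3)
    (hv : ∀ i, v i < 3) :
    #{i | u i ≠ 1 ∧ v i ≠ 1} ≤ #{i | u i = 0} + #{i | v i = 0} := by
  simp only [card_filter, ← sum_add_distrib]
  exact sum_le_sum fun i _ => by
    have := huv i; have := hu i; have := hv i; split_ifs <;> omega

theorem card_ne_ne_add_card_eq_add_card_eq_le_card (huv : ∀ i, u i ≠ v i) (c : ℕ) :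
    #{i | u i ≠ c ∧ v i ≠ c} + (#{i | u i = c} + #{i | v i = c}) ≤ Fintype.card ι := by
  simp only [card_filter, ← sum_add_distrib]
  calc _ ≤ ∑ _ : ι, 1 := sum_le_sum fun i _ => by have := huv i; split_ifs <;> omega
    _ = Fintype.card ι := by simp

end PairColouring

theorem blk_eq_zero_iff (k l x : ℕ) : blk k l x = 0 ↔ x < k := by
  grind [blk]

theorem blk_eq_one_iff (k l x : ℕ) : blk k l x = 1 ↔ k ≤ x ∧ x < k + l := by
  grind [blk]

theorem blk_lt_three (k l x : ℕ) : blk k l x < 3 := by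
  grind [blk]

def pairLeft (k l m : ℕ) : Fin l ↪ Fin (k + l + m) := Fin.castLEEmb (by omega)

def pairRight (k l m : ℕ) : Fin l ↪ Fin (k + l + m) := (Fin.natAddEmb k).trans (Fin.castAddEmb m)

@[simp]
theorem pairLeft_val {k l m : ℕ} (i : Fin l) : (pairLeft k l m i : ℕ) = i := rfl

@[simp]
theorem pairRight_val {k l m : ℕ} (i : Fin l) : (pairRight k l m i : ℕ) = k + i := rfl

def pairs (k l m : ℕ) : Finset (Fin (k + l + m)) :=
  univ.map (pairLeft k l m) ∪ univ.map (pairRight k l m)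

theorem mem_map_pairLeft_iff {k l m : ℕ} (x : Fin (k + l + m)) :
    x ∈ univ.map (pairLeft k l m) ↔ (x : ℕ) < l := by
  simp only [mem_map, mem_univ, true_and, Fin.ext_iff, pairLeft_val]
  exact ⟨fun ⟨i, hi⟩ => hi ▸ i.isLt, fun h => ⟨⟨x, h⟩, rfl⟩⟩

theorem mem_map_pairRight_iff {k l m : ℕ} (x : Fin (k + l + m)) :
    x ∈ univ.map (pairRight k l m) ↔ k ≤ (x : ℕ) ∧ (x : ℕ) < k + l := by
  simp only [mem_map, mem_univ, true_and, Fin.ext_iff, pairRight_val]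
  constructor
  · rintro ⟨i, hi⟩
    omega
  · exact fun h => ⟨⟨x - k, by omega⟩, by simp only; omega⟩

theorem mem_pairs_iff {k l m : ℕ} (x : Fin (k + l + m)) :
    x ∈ pairs k l m ↔ (x : ℕ) < l ∨ (k ≤ (x : ℕ) ∧ (x : ℕ) < k + l) := by
  rw [pairs, mem_union, mem_map_pairLeft_iff, mem_map_pairRight_iff]

theorem pairLeft_ne_pairRight {k l m : ℕ} (hkl : l ≤ k) (i j : Fin l) :
    pairLeft k l m i ≠ pairRight k l m j := fun h => by
  have := congrArg Fin.val h
  rw [pairLeft_val, pairRight_val] at this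
  omega

theorem card_filter_pairs {k l m : ℕ} (hkl : l ≤ k) (p : Fin (k + l + m) → Prop)
    [DecidablePred p] :
    #{x ∈ pairs k l m | p x} = #{i | p (pairLeft k l m i)} + #{i | p (pairRight k l m i)} :=
  card_filter_map_union_map _ _ (pairLeft_ne_pairRight hkl) p

theorem card_filter_off_pairs_add {k l m : ℕ} (q : Fin (k + l + m) → Prop) [DecidablePred q] :
    #{x : Fin (k + l + m) | ((l ≤ (x : ℕ) ∧ (x : ℕ) < k) ∨ k + l ≤ (x : ℕ)) ∧ q x}
      + #{x ∈ pairs k l m | q x} = #{x | q x} := by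
  rw [add_comm, ← card_filter_add_card_filter_not (s := filter q univ) (· ∈ pairs k l m),
    filter_filter, filter_filter]
  congr 2 <;> ext x <;> simp only [mem_filter, mem_univ, true_and, mem_pairs_iff]
  all_goals grind

theorem card_off_pairs {k l m : ℕ} (hkl : l ≤ k) :
    #{x : Fin (k + l + m) | (l ≤ (x : ℕ) ∧ (x : ℕ) < k) ∨ k + l ≤ (x : ℕ)} = k - l + m := by
  have h := card_filter_off_pairs_add (k := k) (l := l) (m := m) (fun _ => True)
  rw [card_filter_pairs hkl] at h
  simp only [and_true, filter_true, card_univ, Fintype.card_fin] at h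
  omega

theorem card_perm_val_lt {k l m : ℕ} (σ : Perm (Fin (k + l + m))) :
    #{x | ((σ x : Fin (k + l + m)) : ℕ) < k} = k := by
  rw [card_filter_comp_perm σ (fun y => (y : ℕ) < k), Fin.card_filter_val_lt]
  omega

theorem card_perm_blk_eq_one {k l m : ℕ} (σ : Perm (Fin (k + l + m))) :
    #{x | blk k l ((σ x : Fin (k + l + m)) : ℕ) = 1} = l := by
  rw [card_filter_comp_perm σ (fun y => blk k l (y : ℕ) = 1)]
  have : ({y | blk k l (y : ℕ) = 1} : Finset (Fin (k + l + m))) = univ.map (pairRight k l m) := by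
    ext y
    rw [mem_map_pairRight_iff, mem_filter, blk_eq_one_iff]
    simp
  rw [this, card_map, card_univ, Fintype.card_fin]

theorem card_filter_pairRight {k l m : ℕ} (p : Fin (k + l + m) → Prop) [DecidablePred p] :
    #{x : Fin (k + l + m) | k ≤ (x : ℕ) ∧ (x : ℕ) < k + l ∧ p x} =
      #{i | p (pairRight k l m i)} := by
  calc _ = #{x ∈ univ.map (pairRight k l m) | p x} := by
        congr 1
        ext x
        rw [mem_filter, mem_filter, mem_map_pairRight_iff]
        simp only [mem_univ, true_and, and_assoc]
    _ = _ := by rw [filter_map, card_map]; rfl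

theorem card_off_pairs_val_lt_add_le {k l m : ℕ} (hkl : l ≤ k) (σ : Perm (Fin (k + l + m))) :
    #{x : Fin (k + l + m) |
        ((l ≤ (x : ℕ) ∧ (x : ℕ) < k) ∨ k + l ≤ (x : ℕ)) ∧ ((σ x : Fin (k + l + m)) : ℕ) < k} + l ≤
      k - l + m + #{x ∈ pairs k l m | blk k l ((σ x : Fin (k + l + m)) : ℕ) = 1} := by
  have hA₂ := card_filter_off_pairs_add (fun x => blk k l ((σ x : Fin (k + l + m)) : ℕ) = 1)
  rw [card_perm_blk_eq_one] at hA₂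
  have hD := card_filter_add_card_filter_le
    {x : Fin (k + l + m) | (l ≤ (x : ℕ) ∧ (x : ℕ) < k) ∨ k + l ≤ (x : ℕ)}
    (fun x => ((σ x : Fin (k + l + m)) : ℕ) < k)
    (fun x => blk k l ((σ x : Fin (k + l + m)) : ℕ) = 1)
    (fun x h₁ h₂ => by rw [blk_eq_one_iff] at h₂; omega)
  rw [filter_filter, filter_filter, card_off_pairs hkl] at hD
  omega

/-- For `σ ∈ R·C·R'·C` such that `σ(j-k)` and `σ(j)` never lie in the same block for
`j ∈ A₂`: with `r = |{i ∈ [ℓ+1,k] ∪ A₃ : σ(i) ∈ A₁}|` and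
`s = |{j ∈ A₂ : σ(j) ∉ A₂ and σ(j-k) ∉ A₂}|`, one has `r ≥ k - ℓ` and
`r + s ≤ min(k, k - ℓ + m)`. -/
theorem r_s_bounds (k l m : ℕ) (hkl : l ≤ k) (σ : Perm (Fin (k + l + m)))
    (hblocks : ∀ (j : ℕ) (h1 : k ≤ j) (h2 : j < k + l),
      blk k l ((σ ⟨j - k, by omega⟩ : Fin (k + l + m)) : ℕ) ≠
        blk k l ((σ ⟨j, by omega⟩ : Fin (k + l + m)) : ℕ))
    (r s : ℕ)
    (hr : r = (univ.filter (fun i : Fin (k + l + m) =>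
        ((l ≤ (i : ℕ) ∧ (i : ℕ) < k) ∨ k + l ≤ (i : ℕ)) ∧ ((σ i : Fin (k + l + m)) : ℕ) < k)).card)
    (hs : s = (univ.filter (fun j : Fin (k + l + m) =>
        k ≤ (j : ℕ) ∧ (j : ℕ) < k + l ∧ blk k l ((σ j : Fin (k + l + m)) : ℕ) ≠ 1 ∧
          blk k l ((σ ⟨(j : ℕ) - k, by have := j.isLt; omega⟩ : Fin (k + l + m)) : ℕ) ≠ 1)).card) :
    k - l ≤ r ∧ r + s ≤ min k (k - l + m) := by
  set u : Fin l → ℕ := fun i => blk k l (σ (pairLeft k l m i))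
  set v : Fin l → ℕ := fun i => blk k l (σ (pairRight k l m i))
  have huv : ∀ i, u i ≠ v i := fun i => by
    convert hblocks (k + i) (by omega) (by omega) using 4 <;> ext <;> simp
  have hs' : s = #{i | u i ≠ 1 ∧ v i ≠ 1} := by
    rw [hs, card_filter_pairRight]
    simp only [pairRight_val, Nat.add_sub_cancel_left]
    exact congrArg card (filter_congr fun i _ => and_comm)
  have hA₁ : r + (#{i | u i = 0} + #{i | v i = 0}) = k := by
    simp only [u, v, blk_eq_zero_iff]
    rw [hr, ← card_filter_pairs hkl (fun x => ((σ x : Fin (k + l + m)) : ℕ) < k),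
      card_filter_off_pairs_add, card_perm_val_lt]
  have hA₂ : r + l ≤ k - l + m + (#{i | u i = 1} + #{i | v i = 1}) := by
    rw [hr, ← card_filter_pairs hkl (fun x => blk k l ((σ x : Fin (k + l + m)) : ℕ) = 1)]
    exact card_off_pairs_val_lt_add_le hkl σ
  have h₀ := card_eq_add_card_eq_le_card huv 0
  have h₁ :=
    card_ne_ne_le_card_eq_add_card_eq huv (fun _ => blk_lt_three ..) (fun _ => blk_lt_three ..)
  have h₂ := card_ne_ne_add_card_eq_add_card_eq_le_card huv 1
  simp only [Fintype.card_fin] at h₀ h₂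
  omega
end

section
/- Let λ ⊢ n with s a λ-tableau, and for a commutative ring O let S^O_λ be the dual Specht module realized as the left ideal O·S_n·Y_s. Then the quotient ℤS_n / ℤS_n·Y_s is a free ℤ-module; equivalently, Tor₁^ℤ(O, ℤS_n/ℤS_n·Y_s) = 0 for every commutative ring O. -/
/-!
Over the PID `ℤ` a finitely generated torsion-free module is free, so it suffices to show that
`V = ℤS_n·Y_s` is saturated: `d • x ∈ V` with `d ≠ 0` forces `x ∈ V`. The polytabloids `g·Y_s`
span `V`, and by the Garnir relations (a signed-sum cancellation over the permutations of a
set of entries that cannot all lie in distinct columns) so do the standard ones. A standard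
polytabloid `g·Y_s` has coefficient `1` at `g`, and its coefficient at any other standard `h`
vanishes unless `h` has strictly smaller column weight. This unitriangularity lets one peel off,
one at a time, the coefficients of a representation of `d • x`, each of which is divisible by `d`.
-/

open Finset Equiv MonoidAlgebra

open scoped Pointwise

theorem Submodule.mem_span_image_of_smul_mem_of_triangular {R M ι α : Type*} [Ring R]
    [AddCommGroup M] [Module R M] [LinearOrder α] {S : Finset ι} (v : ι → M)
    (φ : ι → M →ₗ[R] R) (w : ι → α) (hdiag : ∀ i ∈ S, φ i (v i) = 1)
    (htri : ∀ i ∈ S, ∀ j ∈ S, φ j (v i) ≠ 0 → i = j ∨ w j < w i)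
    {d : R} (hd : IsSMulRegular M d) {x : M} (hx : d • x ∈ span R (v '' S)) :
    x ∈ span R (v '' S) := by
  classical
  obtain ⟨c, hc⟩ := (mem_span_image_finset_iff_exists_fun' R).mp hx
  suffices h : ∀ T ⊆ S, ∀ x : M, ∑ i ∈ T, c i • v i = d • x → x ∈ span R (v '' S) from
    h S subset_rfl x hc
  -- Remove the term of largest weight `a`: `φ a` kills all others, so `c a = d * φ a x`.
  intro T
  induction T using Finset.induction_on_max_value w with
  | empty =>
    intro _ x hx
    rw [sum_empty, eq_comm, ← smul_zero d] at hx
    rw [hd hx]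
    exact zero_mem _
  | insert a T haT hmax ih =>
    intro hTS x hx
    have haS : a ∈ S := hTS (mem_insert_self a T)
    have hvanish : ∀ i ∈ T, φ a (v i) = 0 := fun i hi => by
      by_contra hne
      rcases htri i (hTS (mem_insert_of_mem hi)) a haS hne with rfl | hlt
      · exact haT hi
      · exact (hmax i hi).not_gt hlt
    have hca : c a = d * φ a x := by
      have := congrArg (φ a) hx
      rw [sum_insert haT, map_add, map_sum, sum_eq_zero fun i hi => by
        rw [map_smul, hvanish i hi, smul_zero], map_smul, map_smul, hdiag a haS] at this
      simpa using this
    have hrest : ∑ i ∈ T, c i • v i = d • (x - φ a x • v a) := by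
      rw [smul_sub, smul_smul, ← hca, ← hx, sum_insert haT, add_sub_cancel_left]
    have := ih ((subset_insert a T).trans hTS) _ hrest
    simpa using add_mem this (smul_mem _ (φ a x) (subset_span ⟨a, haS, rfl⟩))

theorem Submodule.isTorsionFree_quotient {R M : Type*} [CommRing R] [IsDomain R]
    [AddCommGroup M] [Module R M] (N : Submodule R M)
    (h : ∀ d : R, d ≠ 0 → ∀ x : M, d • x ∈ N → x ∈ N) : Module.IsTorsionFree R (M ⧸ N) := by
  refine .of_smul_eq_zero fun d z hz => or_iff_not_imp_left.mpr fun hd => ?_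
  obtain ⟨x, rfl⟩ := Quotient.mk_surjective N z
  rw [← Quotient.mk_smul, Quotient.mk_eq_zero] at hz
  rw [Quotient.mk_eq_zero]
  exact h d hd x hz

instance MonoidAlgebra.isAddTorsionFree_int {G : Type*} : IsAddTorsionFree (MonoidAlgebra ℤ G) :=
  .of_isTorsionFree ℤ _

theorem Subgroup.sum_finset_mul_left {G M : Type*} [Group G] [AddCommMonoid M] (K : Subgroup G)
    {S : Finset G} (hS : ∀ σ, σ ∈ S ↔ σ ∈ K) {g : G} (hg : g ∈ K) (f : G → M) :
    ∑ σ ∈ S, f (g * σ) = ∑ σ ∈ S, f σ :=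
  sum_nbij' (g * ·) (g⁻¹ * ·) (fun σ => by simp [hS, K.mul_mem_cancel_left hg])
    (fun σ => by simp [hS, K.mul_mem_cancel_left (inv_mem hg)]) (fun σ _ => by simp)
    (fun σ _ => by simp) fun _ _ => rfl

theorem Subgroup.exists_transversal_add_sum_eq_zero {G β M : Type*} [Group G] [MulAction G β]
    [AddCommGroup M] [IsAddTorsionFree M] (K : Subgroup G) [Fintype K] (b : β) (f : G → M)
    (hf : ∀ σ ∈ K, ∀ τ ∈ K, σ • b = τ • b → f σ = f τ) (hsum : ∑ σ : K, f σ = 0) :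
    ∃ T : Finset G, (∀ σ ∈ T, σ ∈ K ∧ σ • b ≠ b) ∧ f 1 + ∑ σ ∈ T, f σ = 0 := by
  classical
  -- The fibres of `σ ↦ σ • b` are cosets of the stabiliser, so `∑ σ : K, f σ` is `#stab` times
  -- the sum of `f` over one representative per fibre.
  set Φ : K → β := fun σ => (σ : G) • b
  set stab := univ.filter fun σ : K => Φ σ = b
  have hcard : ∀ τ : K, #{σ | Φ σ = Φ τ} = #stab := fun τ => by
    refine (card_nbij' (τ⁻¹ * ·) (τ * ·) ?_ ?_ ?_ ?_) <;> intro σ <;>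
      simp [stab, Φ, mul_smul, inv_smul_eq_iff]
  have hrep : ∀ c ∈ univ.image Φ, ∃ τ, Φ τ = c := fun c hc => by simpa using hc
  choose! rep hrep using hrep
  have hfiber : ∀ c ∈ univ.image Φ, ∑ σ with Φ σ = c, f σ = #stab • f (rep c) := by
    intro c hc
    obtain ⟨τ, -, rfl⟩ := mem_image.mp hc
    rw [← hcard τ, ← sum_const]
    refine sum_congr rfl fun σ hσ => hf _ σ.2 _ (rep _).2 ?_
    exact (mem_filter.mp hσ).2.trans (hrep _ hc).symm
  have hzero : ∑ c ∈ univ.image Φ, f (rep c) = 0 := by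
    have h1 : (1 : K) ∈ stab := by simp [stab, Φ]
    rw [← sum_fiberwise_of_maps_to (fun σ _ => mem_image_of_mem Φ (mem_univ σ)),
      sum_congr rfl hfiber, ← smul_sum] at hsum
    exact (smul_eq_zero.mp hsum).resolve_left (card_ne_zero_of_mem h1)
  have hb : b ∈ univ.image Φ := mem_image.mpr ⟨1, mem_univ _, one_smul G b⟩
  refine ⟨((univ.image Φ).erase b).image fun c => (rep c : G), ?_, ?_⟩
  · intro σ hσ
    obtain ⟨c, hc, rfl⟩ := mem_image.mp hσ
    exact ⟨(rep c).2, fun h => (mem_erase.mp hc).1 ((hrep c (mem_of_mem_erase hc)).symm.trans h)⟩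
  · rw [sum_image fun c hc c' hc' h => by
      rw [← hrep c (mem_of_mem_erase hc), ← hrep c' (mem_of_mem_erase hc'), Subtype.ext h],
      ← hf _ (rep b).2 1 K.one_mem (by simpa [Φ] using hrep b hb),
      add_sum_erase _ (fun c => f (rep c)) hb, hzero]

namespace Equiv.Perm

variable {α β : Type*}

def preservingSubgroup (f : α → β) : Subgroup (Perm α) where
  carrier := {σ | ∀ x, f (σ x) = f x}
  one_mem' _ := rfl
  mul_mem' hσ hτ x := (hσ _).trans (hτ x)
  inv_mem' {σ} hσ x := by simpa using (hσ (σ⁻¹ x)).symm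

@[simp]
lemma mem_preservingSubgroup {f : α → β} {σ : Perm α} :
    σ ∈ preservingSubgroup f ↔ ∀ x, f (σ x) = f x := Iff.rfl

lemma swap_mem_preservingSubgroup [DecidableEq α] {f : α → β} {a b : α} (h : f a = f b) :
    swap a b ∈ preservingSubgroup f := fun x => by
  rcases eq_or_ne x a with rfl | hxa
  · simp [h]
  rcases eq_or_ne x b with rfl | hxb
  · simp [h]
  · rw [swap_apply_of_ne_of_ne hxa hxb]

lemma apply_mem_iff_of_mem_fixingSubgroup {X : Set α} {σ : Perm α}
    (hσ : σ ∈ fixingSubgroup (Perm α) Xᶜ) {y : α} : σ y ∈ X ↔ y ∈ X := by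
  have hfix : ∀ z ∉ X, σ z = z := fun z hz => (mem_fixingSubgroup_iff _).mp hσ z hz
  refine ⟨fun h => ?_, fun h => ?_⟩
  · by_contra hy
    exact hy (hfix y hy ▸ h)
  · by_contra hy
    rw [σ.injective (hfix _ hy)] at hy
    exact hy h

end Equiv.Perm

theorem Finset.card_filter_eq_and_lt_eq {α : Type*} [Fintype α] [LinearOrder α] {p q : α → ℕ}
    (hinj : ∀ x y, p x = p y → q x = q y → x = y)
    (hdown : ∀ x, ∀ l < q x, ∃ y, p y = p x ∧ q y = l)
    (hmono : ∀ x y, p x = p y → q x < q y → x < y) (x : α) :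
    #{y | p y = p x ∧ y < x} = q x := by
  have hset : univ.filter (fun y => p y = p x ∧ y < x) =
      univ.filter (fun y => p y = p x ∧ q y < q x) := by
    refine filter_congr fun y _ => and_congr_right fun hp => ⟨fun hyx => ?_, hmono y x hp⟩
    rcases lt_trichotomy (q y) (q x) with h | h | h
    · exact h
    · exact absurd (hinj y x hp h) hyx.ne
    · exact absurd (hmono x y hp.symm h) (not_lt.mpr hyx.le)
  rw [hset, ← card_range (q x)]
  refine card_bij (fun y _ => q y) (fun y hy => by simpa using (mem_filter.mp hy).2.2)
    (fun y hy z hz h => hinj y z ((mem_filter.mp hy).2.1.trans (mem_filter.mp hz).2.1.symm) h)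
    fun l hl => ?_
  obtain ⟨y, hy, rfl⟩ := hdown x l (mem_range.mp hl)
  exact ⟨y, by simpa [hy] using mem_range.mp hl, rfl⟩

theorem Finset.sum_lt_sum_of_card_eq_of_forall_lt {ι M : Type*} [AddCommMonoid M] [PartialOrder M]
    [IsOrderedCancelAddMonoid M] {s t : Finset ι} (f : ι → M) (hcard : #s = #t)
    (hs : s.Nonempty) (hlt : ∀ p ∈ s, ∀ q ∈ t, f p < f q) : ∑ i ∈ s, f i < ∑ i ∈ t, f i := by
  have : Nonempty s := hs.to_subtype
  let φ := equivOfCardEq hcard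
  rw [← sum_coe_sort s, ← sum_coe_sort t, ← φ.sum_comp]
  exact sum_lt_sum_of_nonempty univ_nonempty fun p _ => hlt _ p.2 _ (φ p).2

theorem Finset.sum_lt_sum_of_subset_union {ι M : Type*} [DecidableEq ι] [AddCommMonoid M]
    [PartialOrder M] [IsOrderedCancelAddMonoid M] {A B F : Finset ι} (f : ι → M)
    (hsep : ∀ a ∈ A, ∀ b ∈ B, f b < f a) (hF : F ⊆ A ∪ B) (hcard : #F = #B) (hne : F ≠ B) :
    ∑ i ∈ B, f i < ∑ i ∈ F, f i := by
  have hBF : (B \ F).Nonempty := sdiff_nonempty.mpr fun hsub =>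
    hne (eq_of_subset_of_card_le hsub hcard.le).symm
  have hcard' : #(B \ F) = #(F \ B) := by
    have := card_sdiff_add_card_inter B F
    have := card_sdiff_add_card_inter F B
    rw [inter_comm] at this
    omega
  have hlt := sum_lt_sum_of_card_eq_of_forall_lt f hcard' hBF fun p hp q hq => by
    have hqA : q ∈ A := (mem_union.mp (hF (mem_sdiff.mp hq).1)).resolve_right (mem_sdiff.mp hq).2
    exact hsep q hqA p (mem_sdiff.mp hp).1
  rw [← sum_inter_add_sum_sdiff B F, ← sum_inter_add_sum_sdiff F B, inter_comm]
  exact (add_lt_add_iff_left _).mpr hlt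

namespace YS

variable {n : ℕ} {lam : YoungDiagram} (e : ↥lam.cells ≃ Fin n)

def rowOf (x : Fin n) : ℕ := (e.symm x : ℕ × ℕ).1

def colOf (x : Fin n) : ℕ := (e.symm x : ℕ × ℕ).2

@[simp] lemma rowOf_apply (c : ↥lam.cells) : rowOf e (e c) = (c : ℕ × ℕ).1 := by simp [rowOf]

@[simp] lemma colOf_apply (c : ↥lam.cells) : colOf e (e c) = (c : ℕ × ℕ).2 := by simp [colOf]

lemma mk_rowOf_colOf_mem (x : Fin n) : (rowOf e x, colOf e x) ∈ lam :=
  (YoungDiagram.mem_cells _).mp (e.symm x).2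

variable {e} in
lemma eq_of_rowOf_eq_of_colOf_eq {x y : Fin n} (hr : rowOf e x = rowOf e y)
    (hc : colOf e x = colOf e y) : x = y :=
  e.symm.injective (Subtype.ext (Prod.ext hr hc))

lemma exists_rowOf_colOf {i j : ℕ} (h : (i, j) ∈ lam) :
    ∃ x, rowOf e x = i ∧ colOf e x = j :=
  ⟨e ⟨(i, j), by simpa using h⟩, by simp, by simp⟩

lemma entriesFinset_eq_univ : entriesFinset lam e = univ :=
  eq_univ_of_forall fun x => mem_image.mpr ⟨e.symm x, mem_attach _ _, e.apply_symm_apply x⟩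

lemma mem_rowFinset {x : Fin n} {i : ℕ} : x ∈ rowFinset lam e i ↔ rowOf e x = i := by
  simp [rowFinset, rowOf, ← Equiv.eq_symm_apply]

lemma mem_colFinset {x : Fin n} {j : ℕ} : x ∈ colFinset lam e j ↔ colOf e x = j := by
  simp [colFinset, colOf, ← Equiv.eq_symm_apply]

lemma mapsTo_fibers_iff {σ : Perm (Fin n)} (π : ℕ × ℕ → ℕ) (F : ℕ → Finset (Fin n))
    (hF : ∀ x i, x ∈ F i ↔ π (e.symm x) = i) :
    (∀ i ∈ lam.cells.image π, ∀ x ∈ F i, σ x ∈ F i) ↔ ∀ x, π (e.symm (σ x)) = π (e.symm x) := by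
  simp only [hF]
  refine ⟨fun h x => h _ (mem_image_of_mem π (e.symm x).2) x rfl, ?_⟩
  rintro h i - x rfl
  exact h x

variable {e} in
lemma mem_rowStab_iff {σ : Perm (Fin n)} :
    σ ∈ rowStab lam e ↔ σ ∈ Perm.preservingSubgroup (rowOf e) := by
  simp only [rowStab, mem_filter, mem_univ, true_and, entriesFinset_eq_univ, not_true_eq_false,
    IsEmpty.forall_iff, implies_true, mapsTo_fibers_iff e Prod.fst _ fun x i => mem_rowFinset e]
  rfl

variable {e} in
lemma mem_colStab_iff {σ : Perm (Fin n)} :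
    σ ∈ colStab lam e ↔ σ ∈ Perm.preservingSubgroup (colOf e) := by
  simp only [colStab, mem_filter, mem_univ, true_and, entriesFinset_eq_univ, not_true_eq_false,
    IsEmpty.forall_iff, implies_true, mapsTo_fibers_iff e Prod.snd _ fun x i => mem_colFinset e]
  rfl

lemma one_mem_rowStab : (1 : Perm (Fin n)) ∈ rowStab lam e :=
  mem_rowStab_iff.mpr (one_mem _)

lemma one_mem_colStab : (1 : Perm (Fin n)) ∈ colStab lam e :=
  mem_colStab_iff.mpr (one_mem _)

lemma mul_mem_rowStab {ρ ρ' : Perm (Fin n)} (hρ : ρ ∈ rowStab lam e) (hρ' : ρ' ∈ rowStab lam e) :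
    ρ * ρ' ∈ rowStab lam e :=
  mem_rowStab_iff.mpr (mul_mem (mem_rowStab_iff.mp hρ) (mem_rowStab_iff.mp hρ'))

lemma eq_one_of_mem_rowStab_of_mem_colStab {σ : Perm (Fin n)} (hr : σ ∈ rowStab lam e)
    (hc : σ ∈ colStab lam e) : σ = 1 := by
  rw [mem_rowStab_iff, Perm.mem_preservingSubgroup] at hr
  rw [mem_colStab_iff, Perm.mem_preservingSubgroup] at hc
  exact Perm.ext fun x => eq_of_rowOf_eq_of_colOf_eq (hr x) (hc x)

noncomputable def colAntisym (g : Perm (Fin n)) : MonoidAlgebra ℤ (Perm (Fin n)) :=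
  single g 1 * altElt (colStab lam e)

noncomputable def polytabloid (g : Perm (Fin n)) : MonoidAlgebra ℤ (Perm (Fin n)) :=
  single g 1 * youngSym lam e

lemma polytabloid_eq_sum_colAntisym (g : Perm (Fin n)) :
    polytabloid e g = ∑ ρ ∈ rowStab lam e, colAntisym e (g * ρ) := by
  simp [polytabloid, colAntisym, youngSym, sumElt, ← mul_assoc, mul_sum, sum_mul]

lemma polytabloid_eq_sum_single (g : Perm (Fin n)) :
    polytabloid e g = ∑ ρ ∈ rowStab lam e, ∑ γ ∈ colStab lam e,
      single (g * ρ * γ) ((Perm.sign γ : ℤˣ) : ℤ) := by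
  simp [polytabloid_eq_sum_colAntisym, colAntisym, altElt, mul_sum]

lemma polytabloid_mul_of_mem_rowStab (g : Perm (Fin n)) {ρ : Perm (Fin n)}
    (hρ : ρ ∈ rowStab lam e) : polytabloid e (g * ρ) = polytabloid e g := by
  rw [polytabloid_eq_sum_colAntisym, polytabloid_eq_sum_colAntisym]
  simpa [mul_assoc] using Subgroup.sum_finset_mul_left _ (fun _ => mem_rowStab_iff)
    (mem_rowStab_iff.mp hρ) fun σ => colAntisym e (g * σ)

lemma colAntisym_mul_of_mem_colStab (g : Perm (Fin n)) {γ : Perm (Fin n)}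
    (hγ : γ ∈ colStab lam e) :
    colAntisym e (g * γ) = ((Perm.sign γ : ℤˣ) : ℤ) • colAntisym e g := by
  have hsign : ∀ σ, ((Perm.sign σ : ℤˣ) : ℤ) =
      ((Perm.sign γ : ℤˣ) : ℤ) * ((Perm.sign (γ * σ) : ℤˣ) : ℤ) := fun σ => by
    rw [Perm.sign_mul, Units.val_mul, ← mul_assoc, ← Units.val_mul, Int.units_mul_self,
      Units.val_one, one_mul]
  simp only [colAntisym, altElt, mul_sum, single_mul_single, one_mul, mul_assoc, smul_sum]
  conv_rhs => rw [← Subgroup.sum_finset_mul_left _ (fun _ => mem_colStab_iff)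
    (mem_colStab_iff.mp hγ)]
  refine sum_congr rfl fun σ _ => ?_
  rw [smul_single', ← hsign]

lemma coeff_polytabloid (g h : Perm (Fin n)) :
    (polytabloid e g).coeff h = ∑ ρ ∈ rowStab lam e, ∑ γ ∈ colStab lam e,
      if g * ρ * γ = h then ((Perm.sign γ : ℤˣ) : ℤ) else 0 := by
  simp [polytabloid_eq_sum_single, Finsupp.single_apply]

lemma coeff_polytabloid_self (g : Perm (Fin n)) : (polytabloid e g).coeff g = 1 := by
  have hsplit : ∀ ρ ∈ rowStab lam e, ∀ γ ∈ colStab lam e, g * ρ * γ = g → ρ = 1 := by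
    intro ρ hρ γ hγ h
    have hργ : ρ = γ⁻¹ := eq_inv_of_mul_eq_one_left (mul_left_cancel (h.trans (mul_one g).symm))
    refine eq_one_of_mem_rowStab_of_mem_colStab e hρ ?_
    rw [hργ, mem_colStab_iff]
    exact inv_mem (mem_colStab_iff.mp hγ)
  rw [coeff_polytabloid, sum_eq_single 1 (fun ρ hρ hρ1 => sum_eq_zero fun γ hγ =>
      if_neg fun h => hρ1 (hsplit ρ hρ γ hγ h)) (absurd (one_mem_rowStab e)),
    sum_eq_single 1 (fun γ _ hγ1 => if_neg fun h => hγ1 (by simpa using h)) (absurd (one_mem_colStab e))]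
  simp

lemma exists_mul_mul_eq_of_coeff_polytabloid_ne_zero {g h : Perm (Fin n)}
    (hgh : (polytabloid e g).coeff h ≠ 0) :
    ∃ ρ ∈ rowStab lam e, ∃ γ ∈ colStab lam e, g * ρ * γ = h := by
  by_contra! hne
  rw [coeff_polytabloid] at hgh
  exact hgh (sum_eq_zero fun ρ hρ => sum_eq_zero fun γ hγ => if_neg (hne ρ hρ γ hγ))

-- `g` acts on the entries: `x` occupies the cell `e.symm (g⁻¹ x)` of the tableau `g ∘ e`.
def rowWeight (g : Perm (Fin n)) : ℕ := ∑ x, rowOf e (g⁻¹ x) * x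

def colWeight (g : Perm (Fin n)) : ℕ := ∑ x, colOf e (g⁻¹ x) * x

lemma rowOf_inv_mul_apply (g : Perm (Fin n)) {ρ : Perm (Fin n)} (hρ : ρ ∈ rowStab lam e)
    (x : Fin n) : rowOf e ((g * ρ)⁻¹ x) = rowOf e (g⁻¹ x) := by
  rw [mul_inv_rev, Perm.mul_apply]
  exact inv_mem (mem_rowStab_iff.mp hρ) _

lemma colOf_inv_mul_apply (g : Perm (Fin n)) {γ : Perm (Fin n)} (hγ : γ ∈ colStab lam e)
    (x : Fin n) : colOf e ((g * γ)⁻¹ x) = colOf e (g⁻¹ x) := by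
  rw [mul_inv_rev, Perm.mul_apply]
  exact inv_mem (mem_colStab_iff.mp hγ) _

lemma rowWeight_mul_of_mem_rowStab (g : Perm (Fin n)) {ρ : Perm (Fin n)}
    (hρ : ρ ∈ rowStab lam e) : rowWeight e (g * ρ) = rowWeight e g := by
  simp only [rowWeight, rowOf_inv_mul_apply e g hρ]

lemma colWeight_mul_of_mem_colStab (g : Perm (Fin n)) {γ : Perm (Fin n)}
    (hγ : γ ∈ colStab lam e) : colWeight e (g * γ) = colWeight e g := by
  simp only [colWeight, colOf_inv_mul_apply e g hγ]

lemma rowWeight_mul (σ g : Perm (Fin n)) :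
    rowWeight e (σ * g) = ∑ y, rowOf e (g⁻¹ y) * (σ y : ℕ) :=
  Fintype.sum_equiv σ.symm _ _ fun x => by simp [mul_inv_rev]

lemma colWeight_mul (σ g : Perm (Fin n)) :
    colWeight e (σ * g) = ∑ y, colOf e (g⁻¹ y) * (σ y : ℕ) :=
  Fintype.sum_equiv σ.symm _ _ fun x => by simp [mul_inv_rev]

def RowStandard (g : Perm (Fin n)) : Prop :=
  ∀ x y, rowOf e (g⁻¹ x) = rowOf e (g⁻¹ y) → colOf e (g⁻¹ x) < colOf e (g⁻¹ y) → x < y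

def ColStandard (g : Perm (Fin n)) : Prop :=
  ∀ x y, colOf e (g⁻¹ x) = colOf e (g⁻¹ y) → rowOf e (g⁻¹ x) < rowOf e (g⁻¹ y) → x < y

instance : DecidablePred (RowStandard e) := fun _ => by unfold RowStandard; infer_instance

instance : DecidablePred (ColStandard e) := fun _ => by unfold ColStandard; infer_instance

lemma colWeight_lt_colWeight_swap_mul (g : Perm (Fin n)) {x y : Fin n}
    (hcol : colOf e (g⁻¹ x) < colOf e (g⁻¹ y)) (hyx : y < x) :
    colWeight e g < colWeight e (swap x y * g) := by
  set a : Fin n → ℤ := fun z => colOf e (g⁻¹ z)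
  have key : ∑ z, a z * (swap x y z : ℕ) = ∑ z, a z * (z : ℕ) + (a y - a x) * (x - y : ℤ) := by
    rw [← sub_eq_iff_eq_add', ← sum_sub_distrib, Fintype.sum_eq_add x y hyx.ne'
      fun z hz => by simp [swap_apply_of_ne_of_ne hz.1 hz.2]]
    simp only [swap_apply_left, swap_apply_right]
    ring
  have hpos : 0 < (a y - a x) * (x - y : ℤ) := mul_pos
    (sub_pos.mpr (by simp only [a]; exact_mod_cast hcol)) (sub_pos.mpr (by exact_mod_cast hyx))
  have : (colWeight e g : ℤ) < colWeight e (swap x y * g) := by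
    rw [colWeight_mul, colWeight]
    push_cast
    linarith
  exact_mod_cast this

lemma rowStandard_of_forall_colWeight_le {g : Perm (Fin n)}
    (hmax : ∀ ρ ∈ rowStab lam e, colWeight e (g * ρ) ≤ colWeight e g) : RowStandard e g := by
  intro x y hrow hcol
  by_contra! hxy
  have hyx : y < x := lt_of_le_of_ne hxy fun h => hcol.ne (by rw [h])
  have hρ : swap (g⁻¹ x) (g⁻¹ y) ∈ rowStab lam e :=
    mem_rowStab_iff.mpr (Perm.swap_mem_preservingSubgroup hrow)
  have := hmax _ hρ
  rw [← swap_mul_eq_mul_swap] at this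
  exact this.not_gt (colWeight_lt_colWeight_swap_mul e g hcol hyx)

lemma exists_rowStandard_mul (g : Perm (Fin n)) : ∃ ρ ∈ rowStab lam e, RowStandard e (g * ρ) := by
  obtain ⟨ρ, hρ, hmax⟩ := exists_max_image (rowStab lam e) (fun ρ => colWeight e (g * ρ))
    ⟨1, one_mem_rowStab e⟩
  refine ⟨ρ, hρ, rowStandard_of_forall_colWeight_le e fun ρ' hρ' => ?_⟩
  rw [mul_assoc]
  exact hmax _ (mul_mem_rowStab e hρ hρ')

variable {e} in
lemma eq_of_rowOf_inv_eq_of_colOf_inv_eq {g h : Perm (Fin n)}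
    (hr : ∀ x, rowOf e (g⁻¹ x) = rowOf e (h⁻¹ x)) (hc : ∀ x, colOf e (g⁻¹ x) = colOf e (h⁻¹ x)) :
    g = h :=
  inv_injective (Perm.ext fun x => eq_of_rowOf_eq_of_colOf_eq (hr x) (hc x))

lemma colOf_inv_eq_card {g : Perm (Fin n)} (hg : RowStandard e g) (x : Fin n) :
    colOf e (g⁻¹ x) = #{y | rowOf e (g⁻¹ y) = rowOf e (g⁻¹ x) ∧ y < x} := by
  refine (card_filter_eq_and_lt_eq (fun y z hr hc => ?_) (fun y l hl => ?_) hg x).symm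
  · simpa using eq_of_rowOf_eq_of_colOf_eq hr hc
  · obtain ⟨z, hzr, hzc⟩ := exists_rowOf_colOf e
      (lam.up_left_mem le_rfl hl.le (mk_rowOf_colOf_mem e (g⁻¹ y)))
    exact ⟨g z, by simpa using hzr, by simpa using hzc⟩

lemma rowOf_inv_eq_card {g : Perm (Fin n)} (hg : ColStandard e g) (x : Fin n) :
    rowOf e (g⁻¹ x) = #{y | colOf e (g⁻¹ y) = colOf e (g⁻¹ x) ∧ y < x} := by
  refine (card_filter_eq_and_lt_eq (fun y z hc hr => ?_) (fun y l hl => ?_) hg x).symm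
  · simpa using eq_of_rowOf_eq_of_colOf_eq hr hc
  · obtain ⟨z, hzr, hzc⟩ := exists_rowOf_colOf e
      (lam.up_left_mem hl.le le_rfl (mk_rowOf_colOf_mem e (g⁻¹ y)))
    exact ⟨g z, by simpa using hzc, by simpa using hzr⟩

lemma mul_eq_self_of_rowStandard {g ρ : Perm (Fin n)} (hρ : ρ ∈ rowStab lam e)
    (hg : RowStandard e g) (hgρ : RowStandard e (g * ρ)) : g * ρ = g := by
  have hr := rowOf_inv_mul_apply e g hρ
  refine eq_of_rowOf_inv_eq_of_colOf_inv_eq hr fun x => ?_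
  simp only [colOf_inv_eq_card e hg, colOf_inv_eq_card e hgρ, hr]

lemma mul_eq_self_of_colStandard {g γ : Perm (Fin n)} (hγ : γ ∈ colStab lam e)
    (hg : ColStandard e g) (hgγ : ColStandard e (g * γ)) : g * γ = g := by
  have hc := colOf_inv_mul_apply e g hγ
  refine eq_of_rowOf_inv_eq_of_colOf_inv_eq (fun x => ?_) hc
  simp only [rowOf_inv_eq_card e hg, rowOf_inv_eq_card e hgγ, hc]

lemma colWeight_mul_lt {g ρ : Perm (Fin n)} (hg : RowStandard e g) (hρ : ρ ∈ rowStab lam e)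
    (hne : g * ρ ≠ g) : colWeight e (g * ρ) < colWeight e g := by
  obtain ⟨ρ₀, hρ₀, hmax⟩ := exists_max_image (rowStab lam e) (fun ρ => colWeight e (g * ρ))
    ⟨1, one_mem_rowStab e⟩
  have hstd : ∀ ρ ∈ rowStab lam e, colWeight e (g * ρ₀) ≤ colWeight e (g * ρ) →
      RowStandard e (g * ρ) := fun ρ hρ hle =>
    rowStandard_of_forall_colWeight_le e fun ρ' hρ' => by
      rw [mul_assoc]
      exact (hmax _ (mul_mem_rowStab e hρ hρ')).trans hle
  have h₀ : g * ρ₀ = g := mul_eq_self_of_rowStandard e hρ₀ hg (hstd ρ₀ hρ₀ le_rfl)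
  have hle := hmax ρ hρ
  rw [h₀] at hle
  refine lt_of_le_of_ne hle fun heq => hne ?_
  exact mul_eq_self_of_rowStandard e hρ hg (hstd ρ hρ (by rw [h₀, heq]))

lemma eq_or_colWeight_lt_of_coeff_polytabloid_ne_zero {g h : Perm (Fin n)}
    (hgr : RowStandard e g) (hgc : ColStandard e g) (hh : ColStandard e h)
    (hgh : (polytabloid e g).coeff h ≠ 0) : g = h ∨ colWeight e h < colWeight e g := by
  obtain ⟨ρ, hρ, γ, hγ, rfl⟩ := exists_mul_mul_eq_of_coeff_polytabloid_ne_zero e hgh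
  rw [colWeight_mul_of_mem_colStab e _ hγ]
  by_cases hρ₁ : g * ρ = g
  · rw [hρ₁] at hh ⊢
    exact .inl (mul_eq_self_of_colStandard e hγ hgc hh).symm
  · exact .inr (colWeight_mul_lt e hgr hρ hρ₁)

lemma sum_colAntisym_mul_eq_zero (K : Subgroup (Perm (Fin n))) [Fintype K] (u : Perm (Fin n))
    {a b : Fin n} (hab : a ≠ b) (hK : swap a b ∈ K) (hcol : colOf e (u⁻¹ a) = colOf e (u⁻¹ b)) :
    ∑ σ : K, colAntisym e (σ * u) = 0 := by
  -- Reindexing by `σ ↦ σ * swap a b` negates every term.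
  have hγ : swap (u⁻¹ a) (u⁻¹ b) ∈ colStab lam e :=
    mem_colStab_iff.mpr (Perm.swap_mem_preservingSubgroup hcol)
  have hneg : ∑ σ : K, colAntisym e (σ * u) = -∑ σ : K, colAntisym e (σ * u) := by
    conv_lhs => rw [← Fintype.sum_equiv (Equiv.mulRight (⟨swap a b, hK⟩ : K))
      (fun σ : K => colAntisym e (σ * swap a b * u)) _ fun σ => by simp [mul_assoc]]
    rw [← sum_neg_distrib]
    refine sum_congr rfl fun σ _ => ?_
    rw [mul_assoc, swap_mul_eq_mul_swap, ← mul_assoc, colAntisym_mul_of_mem_colStab e _ hγ,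
      Perm.sign_swap (by simpa using hab)]
    simp
  rw [eq_neg_iff_add_eq_zero, ← two_nsmul] at hneg
  exact (smul_eq_zero.mp hneg).resolve_left two_ne_zero

-- For `x` in cell `(i, j)` and `y` in cell `(i', j)` of `g ∘ e`, with `i < i'` and `y < x`:
-- the entries of row `i` from column `j` on and of row `i'` up to column `j`. They number more
-- than the columns of row `i`, so no element of `g R` puts them in distinct columns.
def garnirTop (g : Perm (Fin n)) (i j : ℕ) : Finset (Fin n) :=
  {a | rowOf e (g⁻¹ a) = i ∧ j ≤ colOf e (g⁻¹ a)}

def garnirBot (g : Perm (Fin n)) (i j : ℕ) : Finset (Fin n) :=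
  {b | rowOf e (g⁻¹ b) = i ∧ colOf e (g⁻¹ b) ≤ j}

lemma rowLen_lt_card_garnirTop_add_card_garnirBot (g : Perm (Fin n)) {i i' j : ℕ}
    (hi : (i, j) ∈ lam) (hi' : (i', j) ∈ lam) :
    lam.rowLen i < #(garnirTop e g i j) + #(garnirBot e g i' j) := by
  have htop : #(Ico j (lam.rowLen i)) ≤ #(garnirTop e g i j) := by
    refine card_le_card_of_surjOn (fun a => colOf e (g⁻¹ a)) fun l hl => ?_
    obtain ⟨hjl, hl⟩ := mem_Ico.mp hl
    obtain ⟨z, hzr, hzc⟩ := exists_rowOf_colOf e (YoungDiagram.mem_iff_lt_rowLen.mpr hl)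
    exact ⟨g z, by simp [garnirTop, hzr, hzc, hjl], by simp [hzc]⟩
  have hbot : #(range (j + 1)) ≤ #(garnirBot e g i' j) := by
    refine card_le_card_of_surjOn (fun b => colOf e (g⁻¹ b)) fun l hl => ?_
    have hlj : l ≤ j := Nat.lt_succ_iff.mp (mem_range.mp hl)
    obtain ⟨z, hzr, hzc⟩ := exists_rowOf_colOf e (lam.up_left_mem le_rfl hlj hi')
    exact ⟨g z, by simp [garnirBot, hzr, hzc, hlj], by simp [hzc]⟩
  have hj := YoungDiagram.mem_iff_lt_rowLen.mp hi
  rw [Nat.card_Ico, card_range] at *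
  omega

lemma exists_ne_colOf_eq_of_mem_garnir (g : Perm (Fin n)) {ρ : Perm (Fin n)}
    (hρ : ρ ∈ rowStab lam e) {i i' j : ℕ} (hii' : i < i') (hi' : (i', j) ∈ lam) :
    ∃ a ∈ garnirTop e g i j ∪ garnirBot e g i' j, ∃ b ∈ garnirTop e g i j ∪ garnirBot e g i' j,
      a ≠ b ∧ colOf e ((g * ρ)⁻¹ a) = colOf e ((g * ρ)⁻¹ b) := by
  have hdisj : Disjoint (garnirTop e g i j) (garnirBot e g i' j) :=
    disjoint_filter.mpr fun a _ ha hb => hii'.ne (ha.1.symm.trans hb.1)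
  have hcard : #(range (lam.rowLen i)) < #(garnirTop e g i j ∪ garnirBot e g i' j) := by
    rw [card_union_of_disjoint hdisj, card_range]
    exact rowLen_lt_card_garnirTop_add_card_garnirBot e g (lam.up_left_mem hii'.le le_rfl hi') hi'
  refine exists_ne_map_eq_of_card_lt_of_maps_to hcard fun z hz => mem_range.mpr ?_
  have hrow : i ≤ rowOf e ((g * ρ)⁻¹ z) := by
    rw [rowOf_inv_mul_apply e g hρ]
    rcases mem_union.mp hz with hz | hz <;> simp only [garnirTop, garnirBot, mem_filter] at hz <;>
      omega
  exact (YoungDiagram.mem_iff_lt_rowLen.mp (mk_rowOf_colOf_mem e _)).trans_le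
    (lam.rowLen_anti _ _ hrow)

def garnirSubgroup (g : Perm (Fin n)) (i i' j : ℕ) : Subgroup (Perm (Fin n)) :=
  fixingSubgroup (Perm (Fin n)) (↑(garnirTop e g i j ∪ garnirBot e g i' j) : Set (Fin n))ᶜ

noncomputable instance (g : Perm (Fin n)) (i i' j : ℕ) : Fintype (garnirSubgroup e g i i' j) :=
  Fintype.ofFinite _

lemma sum_polytabloid_mul_eq_zero (g : Perm (Fin n)) {i i' j : ℕ} (hii' : i < i')
    (hi' : (i', j) ∈ lam) : ∑ σ : garnirSubgroup e g i i' j, polytabloid e (σ * g) = 0 := by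
  simp_rw [polytabloid_eq_sum_colAntisym, mul_assoc]
  rw [sum_comm]
  refine sum_eq_zero fun ρ hρ => ?_
  obtain ⟨a, ha, b, hb, hab, hcol⟩ := exists_ne_colOf_eq_of_mem_garnir e g hρ hii' hi'
  refine sum_colAntisym_mul_eq_zero e _ _ hab ?_ hcol
  exact (mem_fixingSubgroup_iff _).mpr fun z hz => swap_apply_of_ne_of_ne
    (fun h => hz (h ▸ ha)) (fun h => hz (h ▸ hb))

lemma rowOf_inv_apply_of_smul_garnirBot_eq (g : Perm (Fin n)) {i i' j : ℕ} {π : Perm (Fin n)}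
    (hπ : π ∈ garnirSubgroup e g i i' j) (hπB : π • garnirBot e g i' j = garnirBot e g i' j)
    (z : Fin n) : rowOf e (g⁻¹ (π z)) = rowOf e (g⁻¹ z) := by
  have hX := Perm.apply_mem_iff_of_mem_fixingSubgroup hπ (y := z)
  have hB : π z ∈ garnirBot e g i' j ↔ z ∈ garnirBot e g i' j := by
    conv_lhs => rw [← hπB]
    exact smul_mem_smul_finset_iff π
  by_cases hzX : z ∈ (↑(garnirTop e g i j ∪ garnirBot e g i' j) : Set (Fin n))
  · simp only [coe_union, Set.mem_union, mem_coe] at hX hzX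
    by_cases hzB : z ∈ garnirBot e g i' j
    · rw [(mem_filter.mp (hB.mpr hzB)).2.1, (mem_filter.mp hzB).2.1]
    · have hzT := hzX.resolve_right hzB
      have hπT := (hX.mpr hzX).resolve_right (hzB ∘ hB.mp)
      rw [(mem_filter.mp hπT).2.1, (mem_filter.mp hzT).2.1]
  · rw [show π z = z from (mem_fixingSubgroup_iff _).mp hπ z hzX]

lemma polytabloid_mul_eq_of_smul_garnirBot_eq (g : Perm (Fin n)) {i i' j : ℕ}
    {σ τ : Perm (Fin n)} (hσ : σ ∈ garnirSubgroup e g i i' j) (hτ : τ ∈ garnirSubgroup e g i i' j)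
    (h : σ • garnirBot e g i' j = τ • garnirBot e g i' j) :
    polytabloid e (σ * g) = polytabloid e (τ * g) := by
  have hrow := rowOf_inv_apply_of_smul_garnirBot_eq e g (mul_mem (inv_mem hτ) hσ)
    (by rw [mul_smul, h, inv_smul_smul])
  have hρ : g⁻¹ * (τ⁻¹ * σ) * g ∈ rowStab lam e := mem_rowStab_iff.mpr fun x => by
    simpa using hrow (g x)
  rw [← polytabloid_mul_of_mem_rowStab e (τ * g) hρ]
  simp [mul_assoc]

lemma sum_garnirBot_lt_sum_smul (g : Perm (Fin n)) {i i' j : ℕ}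
    (hsep : ∀ a ∈ garnirTop e g i j, ∀ b ∈ garnirBot e g i' j, b < a) {σ : Perm (Fin n)}
    (hσ : σ ∈ garnirSubgroup e g i i' j) (hne : σ • garnirBot e g i' j ≠ garnirBot e g i' j) :
    ∑ z ∈ garnirBot e g i' j, ((z : ℕ) : ℤ) < ∑ z ∈ garnirBot e g i' j, ((σ z : ℕ) : ℤ) := by
  have hsub : σ • garnirBot e g i' j ⊆ garnirTop e g i j ∪ garnirBot e g i' j := fun z hz => by
    obtain ⟨w, hw, rfl⟩ := mem_smul_finset.mp hz
    exact (Perm.apply_mem_iff_of_mem_fixingSubgroup hσ).mpr (mem_coe.mpr (mem_union_right _ hw))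
  have := sum_lt_sum_of_subset_union (fun z : Fin n => ((z : ℕ) : ℤ))
    (fun a ha b hb => by simpa using hsep a ha b hb) hsub (card_smul_finset σ _) hne
  rwa [smul_finset_def, sum_image fun x _ y _ h => MulAction.injective σ h] at this

lemma rowWeight_lt_rowWeight_mul (g : Perm (Fin n)) {i i' j : ℕ} (hii' : i < i')
    (hsep : ∀ a ∈ garnirTop e g i j, ∀ b ∈ garnirBot e g i' j, b < a) {σ : Perm (Fin n)}
    (hσ : σ ∈ garnirSubgroup e g i i' j) (hne : σ • garnirBot e g i' j ≠ garnirBot e g i' j) :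
    rowWeight e g < rowWeight e (σ * g) := by
  set T := garnirTop e g i j
  set B := garnirBot e g i' j
  have hdisj : Disjoint T B := disjoint_filter.mpr fun a _ ha hb => hii'.ne (ha.1.symm.trans hb.1)
  have hfix : ∀ z ∉ T ∪ B, σ z = z := fun z hz => (mem_fixingSubgroup_iff _).mp hσ z hz
  set D : Fin n → ℤ := fun z => (σ z : ℕ) - (z : ℕ)
  -- `σ` permutes `T ∪ B`, so the displacements `D` sum to zero there.
  have hTB : ∑ z ∈ T, D z + ∑ z ∈ B, D z = 0 := by
    rw [← sum_union hdisj, sum_sub_distrib, sub_eq_zero]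
    exact Perm.sum_comp σ _ (fun z : Fin n => ((z : ℕ) : ℤ)) fun z hz => by
      by_contra h
      exact hz (hfix z h)
  have hB : 0 < ∑ z ∈ B, D z := by
    simpa [D, sum_sub_distrib] using sum_garnirBot_lt_sum_smul e g hsep hσ hne
  have hdiff : (rowWeight e (σ * g) : ℤ) - rowWeight e g =
      ∑ z ∈ T ∪ B, rowOf e (g⁻¹ z) * D z := by
    rw [rowWeight_mul, rowWeight]
    push_cast
    rw [← sum_sub_distrib, ← sum_subset (subset_univ (T ∪ B)) fun z _ hz => by simp [hfix z hz]]
    exact sum_congr rfl fun z _ => by ring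
  have hrowT : ∑ z ∈ T, (rowOf e (g⁻¹ z) : ℤ) * D z = i * ∑ z ∈ T, D z := by
    rw [mul_sum]
    exact sum_congr rfl fun z hz => by rw [(mem_filter.mp hz).2.1]
  have hrowB : ∑ z ∈ B, (rowOf e (g⁻¹ z) : ℤ) * D z = i' * ∑ z ∈ B, D z := by
    rw [mul_sum]
    exact sum_congr rfl fun z hz => by rw [(mem_filter.mp hz).2.1]
  rw [sum_union hdisj, hrowT, hrowB] at hdiff
  have : (rowWeight e g : ℤ) < rowWeight e (σ * g) := by
    have hpos := mul_pos (sub_pos.mpr (Int.ofNat_lt.mpr hii')) hB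
    have hT : (i : ℤ) * ∑ z ∈ T, D z = -(i * ∑ z ∈ B, D z) := by linear_combination (i : ℤ) * hTB
    linarith
  exact_mod_cast this

lemma garnirBot_lt_garnirTop {g : Perm (Fin n)} (hg : RowStandard e g) {x y : Fin n}
    (hcol : colOf e (g⁻¹ x) = colOf e (g⁻¹ y)) (hyx : y < x) :
    ∀ a ∈ garnirTop e g (rowOf e (g⁻¹ x)) (colOf e (g⁻¹ x)),
      ∀ b ∈ garnirBot e g (rowOf e (g⁻¹ y)) (colOf e (g⁻¹ x)), b < a := by
  intro a ha b hb
  obtain ⟨har, hac⟩ := (mem_filter.mp ha).2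
  obtain ⟨hbr, hbc⟩ := (mem_filter.mp hb).2
  have hxa : x ≤ a := by
    rcases hac.lt_or_eq with h | h
    · exact (hg x a har.symm h).le
    · exact (by simpa using eq_of_rowOf_eq_of_colOf_eq har h.symm : a = x).ge
  have hby : b ≤ y := by
    rw [hcol] at hbc
    rcases hbc.lt_or_eq with h | h
    · exact (hg b y hbr h).le
    · exact (by simpa using eq_of_rowOf_eq_of_colOf_eq hbr h : b = y).le
  exact hby.trans_lt (hyx.trans_le hxa)

lemma exists_garnir_relation {g : Perm (Fin n)} (hr : RowStandard e g) (hc : ¬ ColStandard e g) :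
    ∃ T : Finset (Perm (Fin n)), (∀ σ ∈ T, rowWeight e g < rowWeight e (σ * g)) ∧
      polytabloid e g + ∑ σ ∈ T, polytabloid e (σ * g) = 0 := by
  simp only [ColStandard, not_forall, not_lt] at hc
  obtain ⟨x, y, hcol, hrow, hyx⟩ := hc
  replace hyx : y < x := hyx.lt_of_ne fun h => hrow.ne (by rw [h])
  have hi' : (rowOf e (g⁻¹ y), colOf e (g⁻¹ x)) ∈ lam := hcol ▸ mk_rowOf_colOf_mem e (g⁻¹ y)
  obtain ⟨T, hT, hsum⟩ := (garnirSubgroup e g _ _ _).exists_transversal_add_sum_eq_zero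
    (garnirBot e g _ _) (fun σ => polytabloid e (σ * g))
    (fun σ hσ τ hτ h => polytabloid_mul_eq_of_smul_garnirBot_eq e g hσ hτ h)
    (sum_polytabloid_mul_eq_zero e g hrow hi')
  refine ⟨T, fun σ hσ => ?_, by simpa using hsum⟩
  exact rowWeight_lt_rowWeight_mul e g hrow (garnirBot_lt_garnirTop e hr hcol hyx) (hT σ hσ).1
    (hT σ hσ).2

def standardPerms : Finset (Perm (Fin n)) := {g | RowStandard e g ∧ ColStandard e g}

lemma polytabloid_mem_span_standard (g : Perm (Fin n)) :
    polytabloid e g ∈ Submodule.span ℤ (polytabloid e '' standardPerms e) := by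
  induction g using (Finite.wellFounded_of_trans_of_irrefl
    fun g h : Perm (Fin n) => rowWeight e h < rowWeight e g).induction with
  | _ g ih =>
    obtain ⟨ρ, hρ, hr⟩ := exists_rowStandard_mul e g
    rw [← polytabloid_mul_of_mem_rowStab e g hρ]
    by_cases hc : ColStandard e (g * ρ)
    · exact Submodule.subset_span ⟨g * ρ, by simp [standardPerms, hr, hc], rfl⟩
    obtain ⟨T, hT, hsum⟩ := exists_garnir_relation e hr hc
    rw [eq_neg_of_add_eq_zero_left hsum]
    refine Submodule.neg_mem _ (Submodule.sum_mem _ fun σ hσ => ih _ ?_)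
    simpa [rowWeight_mul_of_mem_rowStab e g hρ, mul_assoc] using hT σ hσ

lemma range_mulRight_youngSym :
    LinearMap.range (LinearMap.mulRight ℤ (youngSym lam e)) =
      Submodule.span ℤ (polytabloid e '' standardPerms e) := by
  refine le_antisymm ?_ (Submodule.span_le.mpr ?_)
  · rintro _ ⟨x, rfl⟩
    induction x using MonoidAlgebra.induction_linear with
    | zero => simp
    | add x y hx hy => simpa [add_mul] using add_mem hx hy
    | single g r =>
      have : single g r * youngSym lam e = r • polytabloid e g := by
        rw [polytabloid, ← smul_mul_assoc, smul_single', mul_one]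
      simpa [this] using Submodule.smul_mem _ r (polytabloid_mem_span_standard e g)
  · rintro _ ⟨g, -, rfl⟩
    exact ⟨single g 1, rfl⟩

end YS

open YS in
theorem quotient_by_youngSym_ideal_free_general (lam : YoungDiagram) (n : ℕ)
    (s : ↥lam.cells → Fin n) (hs : Function.Bijective s) :
    Module.Free ℤ
      (MonoidAlgebra ℤ (Equiv.Perm (Fin n)) ⧸
        LinearMap.range (LinearMap.mulRight ℤ (youngSym lam s))) := by
  set e := Equiv.ofBijective s hs
  have hV : LinearMap.range (LinearMap.mulRight ℤ (youngSym lam s)) =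
      Submodule.span ℤ (polytabloid e '' standardPerms e) := range_mulRight_youngSym e
  have : Module.IsTorsionFree ℤ (MonoidAlgebra ℤ (Perm (Fin n)) ⧸
      LinearMap.range (LinearMap.mulRight ℤ (youngSym lam s))) := by
    refine Submodule.isTorsionFree_quotient _ fun d hd x hx => ?_
    rw [hV] at hx ⊢
    refine Submodule.mem_span_image_of_smul_mem_of_triangular (polytabloid e)
      (fun g => Finsupp.lapply g ∘ₗ (coeffLinearEquiv ℤ).toLinearMap) (colWeight e)
      (fun g _ => coeff_polytabloid_self e g) (fun g hg h hh hgh => ?_)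
      (IsSMulRegular.of_ne_zero hd) hx
    simp only [standardPerms, mem_filter] at hg hh
    exact eq_or_colWeight_lt_of_coeff_polytabloid_ne_zero e hg.2.1 hg.2.2 hh.2.2 hgh
  exact Module.free_of_finite_type_torsion_free'

open YS in
/-- The quotient `ℤS_n / ℤS_n·Y_s` of the integral group algebra by the left ideal generated
by the Young symmetrizer of a `λ`-tableau `s` is a free `ℤ`-module. -/
theorem quotient_by_youngSym_ideal_free (lam : YoungDiagram) (n : ℕ)
    (hn : lam.card = n) (s : ↥lam.cells → Fin n) (hs : Function.Bijective s) :
    Module.Free ℤ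
      (MonoidAlgebra ℤ (Equiv.Perm (Fin n)) ⧸
        LinearMap.range (LinearMap.mulRight ℤ (youngSym lam s))) :=
  quotient_by_youngSym_ideal_free_general lam n s hs
end

section
/- Let n ≥ 1 and λ ⊢ n with λ ≠ trivial cases excluded: for any standard λ-tableau s different from the row-reading tableau T^λ, there exists i ∈ [1, n−1] such that i+1 occupies a strictly higher row of s than i, and the tableau s_i · s (obtained by swapping the positions of i and i+1) is standard and strictly dominates s in the dominance order on standard λ-tableaux. -/
/-!
If every `i + 1` lies in a row weakly below the row of `i`, the entries of a standard tableau
increase along the row-reading order, which forces it to be `T^λ`. Otherwise take `i` with `i + 1`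
strictly higher than `i`; column strictness puts `i + 1` strictly to the right of `i` as well, so
the two cells are incomparable and swapping `i` and `i + 1` keeps the tableau standard. The only
subtableau that changes is the one with entries `< i + 1`, in which the cell of `i` is traded for
the higher cell of `i + 1`.
-/

/-- `f` is a standard tableau of shape `lam` with entries `0, …, n-1`:
it is injective with values in `[0, n)` and strictly increasing along rows and columns. -/
def IsStdTab (lam : YoungDiagram) (n : ℕ) (f : ↥lam.cells → ℕ) : Prop :=
  Function.Injective f ∧ (∀ c, f c < n) ∧
    ∀ c d : ↥lam.cells, c.val.1 ≤ d.val.1 → c.val.2 ≤ d.val.2 → c ≠ d → f c < f d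

/-- The row-reading tableau `T^λ`: the entry of a cell is the number of cells strictly
preceding it in the row-reading order. -/
def rowReadingTab (lam : YoungDiagram) : ↥lam.cells → ℕ := fun c =>
  (lam.cells.filter (fun d => d.1 < c.val.1 ∨ (d.1 = c.val.1 ∧ d.2 < c.val.2))).card

/-- Dominance order on tableaux of shape `lam`: `f ⊴ g` iff for every `r`, the shape of the
subtableau of `f` with entries `< r` is dominated (partitionwise) by that of `g`. -/
def TabDomLE (lam : YoungDiagram) (f g : ↥lam.cells → ℕ) : Prop :=
  ∀ r k : ℕ,
    (lam.cells.attach.filter (fun c => c.val.1 < k ∧ f c < r)).card ≤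
      (lam.cells.attach.filter (fun c => c.val.1 < k ∧ g c < r)).card

open Equiv

theorem swap_add_one_apply_lt_iff {i r v : ℕ} (hr : r ≠ i + 1) :
    swap i (i + 1) v < r ↔ v < r := by
  rw [swap_apply_def]
  split_ifs <;> omega

theorem swap_add_one_apply_lt_apply {i v w : ℕ} (hvw : v < w) (h : ¬(v = i ∧ w = i + 1)) :
    swap i (i + 1) v < swap i (i + 1) w := by
  simp only [swap_apply_def]
  split_ifs <;> omega

theorem card_filter_lt_eq_of_injective {α : Type*} [Fintype α] {f : α → ℕ}
    (hf : Function.Injective f) {m : ℕ} (hsurj : ∀ j < m, ∃ a, f a = j) :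
    (Finset.univ.filter fun a => f a < m).card = m := by
  have himage : (Finset.univ.filter fun a => f a < m).image f = Finset.range m := by
    ext j
    simp only [Finset.mem_image, Finset.mem_filter, Finset.mem_univ, true_and, Finset.mem_range]
    constructor
    · rintro ⟨a, ha, rfl⟩
      exact ha
    · intro hj
      obtain ⟨a, rfl⟩ := hsurj j hj
      exact ⟨a, hj, rfl⟩
  rw [← Finset.card_image_of_injective _ hf, himage, Finset.card_range]

namespace IsStdTab

variable {lam : YoungDiagram} {n : ℕ} {f : ↥lam.cells → ℕ}

theorem exists_eq_of_lt (hn : lam.card = n) (hf : IsStdTab lam n f) {j : ℕ} (hj : j < n) :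
    ∃ c, f c = j := by
  have hsub : lam.cells.attach.image f ⊆ Finset.range n :=
    Finset.image_subset_iff.mpr fun c _ => Finset.mem_range.mpr (hf.2.1 c)
  have hcard : (Finset.range n).card ≤ (lam.cells.attach.image f).card := by
    rw [Finset.card_image_of_injective _ hf.1, Finset.card_attach, Finset.card_range, ← hn]
  have hj' : j ∈ lam.cells.attach.image f :=
    Finset.eq_of_subset_of_card_le hsub hcard ▸ Finset.mem_range.mpr hj
  simpa using hj'

section RowsWeaklyIncreasing

variable (hn : lam.card = n) (hf : IsStdTab lam n f)
  (hrow : ∀ c d : ↥lam.cells, f d = f c + 1 → c.val.1 ≤ d.val.1)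
include hn hf hrow

theorem row_le_of_le {c d : ↥lam.cells} (hcd : f c ≤ f d) : c.val.1 ≤ d.val.1 := by
  obtain ⟨m, hm⟩ := Nat.exists_eq_add_of_le hcd
  induction m generalizing d with
  | zero => rw [hf.1 (hm.trans (add_zero _))]
  | succ m ih =>
    obtain ⟨e, he⟩ := hf.exists_eq_of_lt hn (j := f c + m) (by have := hf.2.1 d; omega)
    exact (ih (by omega) he).trans (hrow e d (by omega))

theorem apply_lt_iff_row_lt_or_col_lt (c d : ↥lam.cells) :
    f d < f c ↔ d.val.1 < c.val.1 ∨ (d.val.1 = c.val.1 ∧ d.val.2 < c.val.2) := by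
  constructor
  · intro hlt
    rcases (row_le_of_le hn hf hrow hlt.le).lt_or_eq with hr | hr
    · exact Or.inl hr
    · refine Or.inr ⟨hr, lt_of_not_ge fun hcol => ?_⟩
      exact (hf.2.2 c d hr.ge hcol (by rintro rfl; omega)).not_gt hlt
  · rintro (hr | ⟨hr, hcol⟩)
    · exact lt_of_not_ge fun hle => (row_le_of_le hn hf hrow hle).not_gt hr
    · exact hf.2.2 d c hr.le hcol.le (by rintro rfl; omega)

theorem eq_rowReadingTab : f = rowReadingTab lam := by
  funext c
  have hcount : (Finset.univ.filter fun d => f d < f c).card = f c :=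
    card_filter_lt_eq_of_injective hf.1 fun j hj => hf.exists_eq_of_lt hn (hj.trans (hf.2.1 c))
  simp only [apply_lt_iff_row_lt_or_col_lt hn hf hrow, Finset.univ_eq_attach] at hcount
  rw [Finset.filter_attach (fun d : ℕ × ℕ => d.1 < c.val.1 ∨ (d.1 = c.val.1 ∧ d.2 < c.val.2)),
    Finset.card_map, Finset.card_attach] at hcount
  exact hcount.symm

end RowsWeaklyIncreasing

theorem swap_of_row_lt (hf : IsStdTab lam n f) {c d : ↥lam.cells} {i : ℕ} (hc : f c = i)
    (hd : f d = i + 1) (hrow : d.val.1 < c.val.1) :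
    IsStdTab lam n (fun x => swap i (i + 1) (f x)) := by
  have hin : i + 1 < n := hd ▸ hf.2.1 d
  refine ⟨(swap i (i + 1)).injective.comp hf.1,
    fun x => (swap_add_one_apply_lt_iff hin.ne').mpr (hf.2.1 x), fun a b hab hcol hne => ?_⟩
  refine swap_add_one_apply_lt_apply (hf.2.2 a b hab hcol hne) fun ⟨ha, hb⟩ => ?_
  obtain rfl : a = c := hf.1 (ha.trans hc.symm)
  obtain rfl : b = d := hf.1 (hb.trans hd.symm)
  omega

end IsStdTab

theorem tabDomLE_swap_of_row_le {lam : YoungDiagram} {f : ↥lam.cells → ℕ}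
    (hf : Function.Injective f) {c d : ↥lam.cells} {i : ℕ} (hc : f c = i) (hd : f d = i + 1)
    (hrow : d.val.1 ≤ c.val.1) :
    TabDomLE lam f (fun x => swap i (i + 1) (f x)) := by
  intro r k
  by_cases hr : r = i + 1
  · subst hr
    -- swapping the cells of `i` and `i + 1` maps the first subtableau into the second
    refine Finset.card_le_card_of_injOn (swap c d) (fun x hx => ?_) (swap c d).injective.injOn
    simp only [Finset.mem_coe, Finset.mem_filter, Finset.mem_attach, true_and] at hx ⊢
    by_cases hxc : x = c
    · rw [hxc] at hx ⊢
      rw [swap_apply_left, hd, swap_apply_right]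
      omega
    · have hxd : x ≠ d := by rintro rfl; omega
      have hfx : f x ≠ i := fun h => hxc (hf (h.trans hc.symm))
      rw [swap_apply_of_ne_of_ne hxc hxd, swap_apply_of_ne_of_ne hfx (by omega)]
      exact hx
  · simp only [swap_add_one_apply_lt_iff hr, le_refl]

/-- If `s` is a standard `λ`-tableau different from the row-reading tableau `T^λ`, then some
`i+1` lies in a strictly higher row of `s` than `i`, and swapping `i` and `i+1` yields a
standard tableau strictly dominating `s`. -/
theorem exists_swap_standard_dominating (lam : YoungDiagram) (n : ℕ) (hn : lam.card = n)
    (f : ↥lam.cells → ℕ) (hf : IsStdTab lam n f) (hne : f ≠ rowReadingTab lam) :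
    ∃ i : ℕ, i + 1 < n ∧
      (∃ c d : ↥lam.cells, f c = i ∧ f d = i + 1 ∧ d.val.1 < c.val.1) ∧
      IsStdTab lam n (fun c => Equiv.swap i (i + 1) (f c)) ∧
      TabDomLE lam f (fun c => Equiv.swap i (i + 1) (f c)) ∧
      f ≠ (fun c => Equiv.swap i (i + 1) (f c)) := by
  by_cases H : ∃ c d : ↥lam.cells, f d = f c + 1 ∧ d.val.1 < c.val.1
  · obtain ⟨c, d, hd, hrow⟩ := H
    refine ⟨f c, hd ▸ hf.2.1 d, ⟨c, d, rfl, hd, hrow⟩, hf.swap_of_row_lt rfl hd hrow,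
      tabDomLE_swap_of_row_le hf.1 rfl hd hrow.le, fun h => ?_⟩
    have hc := congrFun h c
    rw [swap_apply_left] at hc
    omega
  · push Not at H
    exact absurd (hf.eq_rowReadingTab hn H) hne
end
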